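/- arXiv:2303.07630 — 4 statements merged into one kernel-verified Lean document; each statement's English description precedes it below -/
import Mathlib

section
/- Let S₀ be a graphical sequence of length n with entries a₁ ≤ ⋯ ≤ aₙ ≤ n−1, and suppose exactly k pairwise non-isomorphic simple graphs realize S₀ (k ≥ 1). Then exactly k pairwise non-isomorphic simple graphs realize the sequence S₀⁽¹⁾ : 1, a₁+1, a₂+1, …, aₙ+1, n+1, and each of these graphs is connected. -/
open scoped Classical


/-- `G` realizes the degree sequence `s` (as a multiset of vertex degrees). -/
def realizes {V : Type*} [Fintype V] (G : SimpleGraph V) (s : Multiset ℕ) : Prop :=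
  Finset.univ.val.map (fun v => G.degree v) = s

/-- The sequence `s` is realized by exactly `k` pairwise non-isomorphic graphs
of order `m`. -/
def exactlyKRealizations (k m : ℕ) (s : Multiset ℕ) : Prop :=
  ∃ Gs : Fin k → SimpleGraph (Fin m),
    (∀ i, realizes (Gs i) s) ∧
    (∀ i j, Nonempty (Gs i ≃g Gs j) → i = j) ∧
    (∀ H : SimpleGraph (Fin m), realizes H s → ∃ i, Nonempty (H ≃g Gs i))

namespace EKS
open SimpleGraph Finset
variable {V W : Type*}

def step (G : SimpleGraph V) : SimpleGraph (Option (Option V)) where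
  Adj x y :=
    (x = none ∧ y ≠ none) ∨ (y = none ∧ x ≠ none) ∨
      (∃ v w, x = some (some v) ∧ y = some (some w) ∧ G.Adj v w)
  symm := by
    constructor
    rintro x y (⟨hx, hy⟩ | ⟨hy, hx⟩ | ⟨v, w, hx, hy, hadj⟩)
    · exact Or.inr (Or.inl ⟨hx, hy⟩)
    · exact Or.inl ⟨hy, hx⟩
    · exact Or.inr (Or.inr ⟨w, v, hy, hx, hadj.symm⟩)
  loopless := by
    constructor
    rintro x (⟨hx, hy⟩ | ⟨hy, hx⟩ | ⟨v, w, hx, hy, hadj⟩)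
    · exact hy hx
    · exact hx hy
    · rw [hx, Option.some_inj, Option.some_inj] at hy
      exact G.irrefl (hy ▸ hadj)

@[simp] lemma step_adj_none_left (G : SimpleGraph V) (y : Option (Option V)) :
    (step G).Adj none y ↔ y ≠ none := by simp [step]

@[simp] lemma step_adj_pendant_left (G : SimpleGraph V) (y : Option (Option V)) :
    (step G).Adj (some none) y ↔ y = none := by simp [step]

@[simp] lemma step_adj_ss (G : SimpleGraph V) (v w : V) :
    (step G).Adj (some (some v)) (some (some w)) ↔ G.Adj v w := by simp [step]

@[simp] lemma step_adj_ss_left (G : SimpleGraph V) (v : V) (y : Option (Option V)) :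
    (step G).Adj (some (some v)) y ↔ y = none ∨ ∃ w, y = some (some w) ∧ G.Adj v w := by
  simp [step]

variable [Fintype V]

lemma step_degree_none (G : SimpleGraph V) :
    (step G).degree none = Fintype.card V + 1 := by
  rw [← card_neighborFinset_eq_degree]
  have h : (step G).neighborFinset none = Finset.univ.erase none := by
    ext x; simp [mem_neighborFinset, eq_comm]
  rw [h, Finset.card_erase_of_mem (Finset.mem_univ _), Finset.card_univ,
    Fintype.card_option, Fintype.card_option]
  omega

lemma step_degree_pendant (G : SimpleGraph V) :
    (step G).degree (some none) = 1 := by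
  rw [← card_neighborFinset_eq_degree]
  have h : (step G).neighborFinset (some none) = {none} := by
    ext x; simp [mem_neighborFinset]
  rw [h, Finset.card_singleton]

lemma step_degree_ss (G : SimpleGraph V) (v : V) :
    (step G).degree (some (some v)) = G.degree v + 1 := by
  classical
  rw [← card_neighborFinset_eq_degree]
  have h : (step G).neighborFinset (some (some v)) =
      insert none ((G.neighborFinset v).map
        ⟨fun w => some (some w), fun a b hab => by
          simpa using hab⟩) := by
    ext x
    simp only [mem_neighborFinset, step_adj_ss_left, Finset.mem_insert, Finset.mem_map,
      Function.Embedding.coeFn_mk]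
    constructor
    · rintro (h | ⟨w, rfl, hw⟩)
      · exact Or.inl h
      · exact Or.inr ⟨w, by simpa [mem_neighborFinset] using hw, rfl⟩
    · rintro (h | ⟨w, hw, rfl⟩)
      · exact Or.inl h
      · exact Or.inr ⟨w, rfl, by simpa [mem_neighborFinset] using hw⟩
  rw [h, Finset.card_insert_of_notMem (by simp), Finset.card_map,
    card_neighborFinset_eq_degree, Nat.add_comm]

lemma univ_val_map_option {α β : Type*} [Fintype α] (f : Option α → β) :
    (Finset.univ : Finset (Option α)).val.map f
      = f none ::ₘ (Finset.univ : Finset α).val.map (fun x => f (some x)) := by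
  rw [univ_option]
  simp [Finset.insertNone, Multiset.map_map, Function.comp]

lemma degreeMultiset_step (G : SimpleGraph V) :
    (Finset.univ : Finset (Option (Option V))).val.map (fun x => (step G).degree x)
      = 1 ::ₘ (Fintype.card V + 1) ::ₘ
        ((Finset.univ : Finset V).val.map (fun v => G.degree v)).map (· + 1) := by
  rw [univ_val_map_option, univ_val_map_option, step_degree_none, step_degree_pendant]
  rw [Multiset.cons_swap]
  congr 2
  rw [Multiset.map_map]
  apply Multiset.map_congr rfl
  intro v _
  simp [step_degree_ss]


lemma iso_degree {V W : Type*} [Fintype V] [Fintype W] {A : SimpleGraph V} {B : SimpleGraph W}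
    (f : A ≃g B) (v : V) : B.degree (f v) = A.degree v := by
  rw [← card_neighborSet_eq_degree, ← card_neighborSet_eq_degree]
  exact (Fintype.card_congr (f.mapNeighborSet v)).symm

lemma degreeMultiset_iso {V W : Type*} [Fintype V] [Fintype W] {A : SimpleGraph V}
    {B : SimpleGraph W} (f : A ≃g B) :
    (Finset.univ : Finset V).val.map (fun v => A.degree v)
      = (Finset.univ : Finset W).val.map (fun w => B.degree w) := by
  have h1 : (Finset.univ : Finset V).val.map (fun v => A.degree v)
      = (Finset.univ : Finset V).val.map (fun v => B.degree (f v)) :=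
    Multiset.map_congr rfl fun v _ => (iso_degree f v).symm
  rw [h1]
  have h2 : (Finset.univ : Finset V).val.map (fun v => B.degree (f v))
      = ((Finset.univ : Finset V).val.map (fun v => f v)).map (fun w => B.degree w) := by
    rw [Multiset.map_map]; rfl
  rw [h2]
  congr 1
  calc Multiset.map (fun v => f v) Finset.univ.val
      = (Finset.univ.map f.toEquiv.toEmbedding).val := rfl
    _ = Finset.univ.val := by rw [Finset.map_univ_equiv]

/-- `step` is functorial on isomorphisms. -/
noncomputable def stepIso {A : SimpleGraph V} {B : SimpleGraph W} (f : A ≃g B) :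
    step A ≃g step B := by
  refine ⟨Equiv.optionCongr (Equiv.optionCongr f.toEquiv), ?_⟩
  rintro (_ | (_ | v)) (_ | (_ | w)) <;>
    simp [f.map_rel_iff]

/-- Swapping two vertices with identical neighbourhoods is an automorphism. -/
noncomputable def swapIso (G : SimpleGraph V) (x y : V)
    (h : ∀ z, G.Adj x z ↔ G.Adj y z) : G ≃g G where
  toEquiv := Equiv.swap x y
  map_rel_iff' := by
    classical
    have h' : ∀ z, G.Adj z x ↔ G.Adj z y := fun z => by
      rw [G.adj_comm z x, G.adj_comm z y]; exact h z
    have key : ∀ a b, G.Adj a b → G.Adj (Equiv.swap x y a) (Equiv.swap x y b) := by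
      intro a b hab
      rcases eq_or_ne a x with h1 | h1
      · rcases eq_or_ne b x with h3 | h3
        · rw [h1, h3] at hab; exact absurd hab (G.loopless.irrefl x)
        · rcases eq_or_ne b y with h4 | h4
          · rw [h1, h4] at hab
            exact absurd ((h y).mp hab) (G.loopless.irrefl y)
          · rw [h1] at hab ⊢
            rw [Equiv.swap_apply_left, Equiv.swap_apply_of_ne_of_ne h3 h4]
            exact (h b).mp hab
      · rcases eq_or_ne a y with h2 | h2
        · rcases eq_or_ne b y with h4 | h4
          · rw [h2, h4] at hab; exact absurd hab (G.loopless.irrefl y)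
          · rcases eq_or_ne b x with h3 | h3
            · rw [h2, h3] at hab
              exact absurd ((h x).mpr hab) (G.loopless.irrefl x)
            · rw [h2] at hab ⊢
              rw [Equiv.swap_apply_right, Equiv.swap_apply_of_ne_of_ne h3 h4]
              exact (h b).mpr hab
        · rw [Equiv.swap_apply_of_ne_of_ne h1 h2]
          rcases eq_or_ne b x with h3 | h3
          · rw [h3] at hab ⊢
            rw [Equiv.swap_apply_left]
            exact (h' a).mp hab
          · rcases eq_or_ne b y with h4 | h4
            · rw [h4] at hab ⊢
              rw [Equiv.swap_apply_right]
              exact (h' a).mpr hab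
            · rw [Equiv.swap_apply_of_ne_of_ne h3 h4]; exact hab
    intro a b
    constructor
    · intro hab
      have := key _ _ hab
      simpa using this
    · exact key a b

lemma swapIso_apply (G : SimpleGraph V) (x y : V) (h : ∀ z, G.Adj x z ↔ G.Adj y z)
    (z : V) : swapIso G x y h z = Equiv.swap x y z := rfl


/-- Extract an isomorphism of the base graphs from an isomorphism of stepped graphs
fixing the two new vertices. -/
noncomputable def isoOfStepIso {A : SimpleGraph V} {B : SimpleGraph W}
    (f : step A ≃g step B) (h0 : f none = none) (h1 : f (some none) = some none) :
    A ≃g B := by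
  classical
  have hsome : ∀ x : Option V, ∃ y, f.toEquiv (some x) = some y := by
    intro x
    cases hy : f.toEquiv (some x) with
    | none =>
      exact absurd (f.toEquiv.injective (hy.trans h0.symm)) (by simp)
    | some y => exact ⟨y, rfl⟩
  set e1 : Option V ≃ Option W := Equiv.removeNone f.toEquiv with he1
  have he1s : ∀ x : Option V, f.toEquiv (some x) = some (e1 x) := by
    intro x
    exact (Equiv.removeNone_some f.toEquiv (hsome x)).symm
  have he1none : e1 none = none := by
    have h1' : f.toEquiv (some none) = some none := h1
    have := he1s none
    rw [h1'] at this
    exact (Option.some_inj.mp this).symm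
  have hsome1 : ∀ v : V, ∃ w, e1 (some v) = some w := by
    intro v
    cases hy : e1 (some v) with
    | none => exact absurd (e1.injective (hy.trans he1none.symm)) (by simp)
    | some w => exact ⟨w, rfl⟩
  set e2 : V ≃ W := Equiv.removeNone e1 with he2
  have he2s : ∀ v : V, e1 (some v) = some (e2 v) := fun v =>
    (Equiv.removeNone_some e1 (hsome1 v)).symm
  have hf : ∀ v : V, f (some (some v)) = some (some (e2 v)) := by
    intro v
    have := he1s (some v)
    rw [he2s v] at this
    exact this
  refine ⟨e2, ?_⟩
  intro v w
  have := f.map_rel_iff (a := some (some v)) (b := some (some w))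
  rw [RelIso.coe_fn_toEquiv] at *
  rw [hf v, hf w] at this
  simpa using this

lemma degree_isolated {G : SimpleGraph V} {v : V} (h : G.degree v = 0) :
    ∀ w, ¬ G.Adj v w := by
  intro w hw
  have : w ∈ G.neighborFinset v := (mem_neighborFinset _ _ _).mpr hw
  rw [Finset.card_eq_zero.mp h] at this
  exact absurd this (Finset.notMem_empty w)

/-- Injectivity of `step` up to isomorphism (for nonempty vertex type of card `n ≥ 1`). -/
lemma step_inj {n : ℕ} (hn : 1 ≤ n) (A B : SimpleGraph (Fin n))
    (f : step A ≃g step B) : Nonempty (A ≃g B) := by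
  classical
  have hcard : Fintype.card (Fin n) = n := Fintype.card_fin n
  -- f none = none
  have hdeg0 : (step B).degree (f none) = n + 1 := by
    rw [iso_degree f none, step_degree_none, hcard]
  have h0 : f none = none := by
    cases hfn : f none with
    | none => rfl
    | some x =>
      cases x with
      | none =>
        rw [hfn, step_degree_pendant] at hdeg0
        omega
      | some v =>
        rw [hfn, step_degree_ss] at hdeg0
        have := B.degree_lt_card_verts v
        rw [hcard] at this
        omega
  -- f (some none) has degree 1
  have hdeg1 : (step B).degree (f (some none)) = 1 := by
    rw [iso_degree f (some none), step_degree_pendant]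
  cases hfp : f (some none) with
  | none =>
    rw [hfp, step_degree_none, hcard] at hdeg1
    omega
  | some x =>
    cases x with
    | none => exact ⟨isoOfStepIso f h0 hfp⟩
    | some v =>
      -- v is isolated in B; swap `some none` and `some (some v)` in step B
      rw [hfp, step_degree_ss] at hdeg1
      have hv : B.degree v = 0 := by omega
      have hsame : ∀ z, (step B).Adj (some none) z ↔ (step B).Adj (some (some v)) z := by
        intro z
        rw [step_adj_pendant_left, step_adj_ss_left]
        constructor
        · intro hz; exact Or.inl hz
        · rintro (hz | ⟨w, hw, hadj⟩)
          · exact hz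
          · exact absurd hadj (degree_isolated hv w)
      refine ⟨isoOfStepIso (f.trans (swapIso (step B) (some none) (some (some v)) hsame))
        ?_ ?_⟩
      · show swapIso (step B) (some none) (some (some v)) hsame (f none) = none
        rw [h0, swapIso_apply]
        exact @Equiv.swap_apply_of_ne_of_ne _ (fun a b => Classical.propDecidable (a = b)) _ _ _ (by simp) (by simp)
      · show swapIso (step B) (some none) (some (some v)) hsame (f (some none)) = some none
        rw [hfp, swapIso_apply]
        exact @Equiv.swap_apply_right _ (fun a b => Classical.propDecidable (a = b)) _ _


section Decompose
variable {n : ℕ}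

lemma exists_univ_vertex (H : SimpleGraph (Fin (n + 2))) (a : Multiset ℕ)
    (hH : realizes H (1 ::ₘ (n + 1) ::ₘ a.map (· + 1))) :
    ∃ u, H.degree u = n + 1 ∧ ∀ v, v ≠ u → H.Adj u v := by
  classical
  have hmem : (n + 1) ∈ Finset.univ.val.map (fun v => H.degree v) := by
    rw [hH]; exact Multiset.mem_cons_of_mem (Multiset.mem_cons_self _ _)
  obtain ⟨u, -, hu⟩ := Multiset.mem_map.mp hmem
  refine ⟨u, hu, ?_⟩
  have hsub : H.neighborFinset u ⊆ Finset.univ.erase u := by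
    intro v hv
    rw [Finset.mem_erase]
    exact ⟨(H.ne_of_adj ((mem_neighborFinset _ _ _).mp hv)).symm, Finset.mem_univ v⟩
  have hcard2 : (Finset.univ.erase u).card = n + 1 := by
    rw [Finset.card_erase_of_mem (Finset.mem_univ _), Finset.card_univ, Fintype.card_fin]
    omega
  have heq : H.neighborFinset u = Finset.univ.erase u :=
    Finset.eq_of_subset_of_card_le hsub
      (by rw [hcard2, card_neighborFinset_eq_degree, hu])
  intro v hv
  have : v ∈ H.neighborFinset u := by
    rw [heq, Finset.mem_erase]; exact ⟨hv, Finset.mem_univ _⟩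
  exact (mem_neighborFinset _ _ _).mp this

lemma connected_of_realizes (H : SimpleGraph (Fin (n + 2))) (a : Multiset ℕ)
    (hH : realizes H (1 ::ₘ (n + 1) ::ₘ a.map (· + 1))) : H.Connected := by
  obtain ⟨u, -, huniv⟩ := exists_univ_vertex H a hH
  have hr : ∀ x, H.Reachable u x := by
    intro x
    rcases eq_or_ne x u with rfl | hx
    · exact Reachable.refl _
    · exact (huniv x hx).reachable
  rw [SimpleGraph.connected_iff]
  exact ⟨fun x y => (hr x).symm.trans (hr y), ⟨0⟩⟩

lemma decompose (a : Multiset ℕ) (hcard : Multiset.card a = n)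
    (H : SimpleGraph (Fin (n + 2))) (hH : realizes H (1 ::ₘ (n + 1) ::ₘ a.map (· + 1))) :
    ∃ G : SimpleGraph (Fin n), realizes G a ∧ Nonempty (H ≃g step G) := by
  classical
  obtain ⟨u, hudeg, huniv⟩ := exists_univ_vertex H a hH
  -- split off vertex u from the degree multiset
  have humem : u ∈ (Finset.univ : Finset (Fin (n + 2))).val := Finset.mem_univ u
  have hsplit : (Finset.univ : Finset (Fin (n + 2))).val
      = u ::ₘ (Finset.univ : Finset (Fin (n + 2))).val.erase u :=
    (Multiset.cons_erase humem).symm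
  have hM : Multiset.map (fun v => H.degree v)
        ((Finset.univ : Finset (Fin (n + 2))).val.erase u)
      = (1 ::ₘ (n + 1) ::ₘ a.map (· + 1)).erase (n + 1) := by
    have h1 : (n + 1) ::ₘ Multiset.map (fun v => H.degree v)
          ((Finset.univ : Finset (Fin (n + 2))).val.erase u)
        = 1 ::ₘ (n + 1) ::ₘ a.map (· + 1) := by
      have h0 : Multiset.map (fun v => H.degree v) (Finset.univ : Finset (Fin (n + 2))).val
          = 1 ::ₘ (n + 1) ::ₘ a.map (· + 1) := hH
      rw [hsplit, Multiset.map_cons, hudeg] at h0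
      exact h0
    calc Multiset.map (fun v => H.degree v)
          ((Finset.univ : Finset (Fin (n + 2))).val.erase u)
        = ((n + 1) ::ₘ Multiset.map (fun v => H.degree v)
            ((Finset.univ : Finset (Fin (n + 2))).val.erase u)).erase (n + 1) := by
          rw [Multiset.erase_cons_head]
      _ = (1 ::ₘ (n + 1) ::ₘ a.map (· + 1)).erase (n + 1) := by rw [h1]
  have h1M : (1 : ℕ) ∈ Multiset.map (fun v => H.degree v)
      ((Finset.univ : Finset (Fin (n + 2))).val.erase u) := by
    rw [hM]
    rcases Nat.eq_zero_or_pos n with hn0 | hn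
    · subst hn0
      have ha0 : a = 0 := Multiset.card_eq_zero.mp hcard
      subst ha0
      simp
    · have hne : (1 : ℕ) ≠ n + 1 := by omega
      rw [Multiset.erase_cons_tail _ hne, Multiset.erase_cons_head]
      exact Multiset.mem_cons_self _ _
  obtain ⟨w, hwmem, hwdeg⟩ := Multiset.mem_map.mp h1M
  have hwu : w ≠ u :=
    ((Multiset.Nodup.mem_erase_iff Finset.univ.nodup).mp hwmem).1
  have hpend : ∀ x, H.Adj w x → x = u := by
    have hmem : u ∈ H.neighborFinset w :=
      (mem_neighborFinset _ _ _).mpr (huniv w hwu).symm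
    have hcard1 : (H.neighborFinset w).card = 1 := by
      rw [card_neighborFinset_eq_degree, hwdeg]
    obtain ⟨b, hb⟩ := Finset.card_eq_one.mp hcard1
    intro x hx
    have hxmem : x ∈ H.neighborFinset w := (mem_neighborFinset _ _ _).mpr hx
    rw [hb, Finset.mem_singleton] at hmem hxmem
    rw [hxmem, ← hmem]
  -- the complement of {u, w}
  have hV0 : Fintype.card {x : Fin (n + 2) // x ≠ u ∧ x ≠ w} = n := by
    rw [Fintype.card_subtype]
    have hfil : Finset.filter (fun x => x ≠ u ∧ x ≠ w) Finset.univ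
        = (Finset.univ.erase u).erase w := by
      ext x
      simp only [Finset.mem_filter, Finset.mem_erase, Finset.mem_univ, true_and, and_true]
      tauto
    rw [hfil, Finset.card_erase_of_mem
        (Finset.mem_erase.mpr ⟨hwu, Finset.mem_univ _⟩),
      Finset.card_erase_of_mem (Finset.mem_univ _), Finset.card_univ, Fintype.card_fin]
    omega
  set ec : Fin n ≃ {x : Fin (n + 2) // x ≠ u ∧ x ≠ w} :=
    (Fintype.equivFinOfCardEq hV0).symm with hec
  set G₁ : SimpleGraph (Fin n) := SimpleGraph.comap (fun i => ((ec i : _) : Fin (n + 2))) H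
    with hG₁
  -- the explicit equivalence between `Option (Option (Fin n))` and `Fin (n + 2)`
  have hval : ∀ i : Fin n, ((ec i : _) : Fin (n + 2)) ≠ u ∧ ((ec i : _) : Fin (n + 2)) ≠ w :=
    fun i => (ec i).2
  set e3 : Option (Option (Fin n)) ≃ Fin (n + 2) :=
    { toFun := fun x => match x with
        | none => u
        | some none => w
        | some (some i) => ((ec i : _) : Fin (n + 2))
      invFun := fun x =>
        if h1 : x = u then none
        else if h2 : x = w then some none
        else some (some (ec.symm ⟨x, h1, h2⟩))
      left_inv := by
        rintro (_ | (_ | i))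
        · simp
        · simp [hwu]
        · simp [(hval i).1, (hval i).2]
      right_inv := by
        intro x
        by_cases h1 : x = u
        · simp [h1]
        · by_cases h2 : x = w
          · simp [h1, h2, hwu]
          · simp [h1, h2] } with he3
  have he3n : e3 none = u := rfl
  have he3p : e3 (some none) = w := rfl
  have he3s : ∀ i, e3 (some (some i)) = ((ec i : _) : Fin (n + 2)) := fun i => rfl
  have hmri : ∀ x y, H.Adj (e3 x) (e3 y) ↔ (step G₁).Adj x y := by
    rintro (_ | (_ | i)) (_ | (_ | j))
    · simp [he3n]
    · simp only [he3n, he3p, step_adj_none_left]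
      simp [huniv w hwu]
    · simp only [he3n, he3s, step_adj_none_left]
      simp [huniv _ (hval j).1]
    · simp only [he3n, he3p, step_adj_pendant_left]
      simp [(huniv w hwu).symm, H.adj_comm]
    · simp [he3p]
    · simp only [he3p, he3s, step_adj_pendant_left]
      constructor
      · intro hadj
        exact absurd (hpend _ hadj) (hval j).1
      · intro hc
        exact absurd hc (by simp)
    · simp only [he3n, he3s, step_adj_ss_left]
      simp [(huniv _ (hval i).1).symm, H.adj_comm]
    · simp only [he3p, he3s, step_adj_ss_left]
      constructor
      · intro hadj
        exact absurd (hpend _ hadj.symm) (hval i).1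
      · rintro (hc | ⟨w', hw', -⟩)
        · exact absurd hc (by simp)
        · exact absurd hw' (by simp)
    · simp only [he3s, step_adj_ss]
      rfl
  set φ : step G₁ ≃g H :=
    { toEquiv := e3, map_rel_iff' := fun {x y} => hmri x y } with hφ
  have hφfun : ∀ x, φ x = e3 x := fun x => rfl
  -- degree sequence of G₁
  have hds := degreeMultiset_iso φ
  have hstep : (Finset.univ : Finset (Option (Option (Fin n)))).val.map
        (fun x => (step G₁).degree x)
      = 1 ::ₘ (n + 1) ::ₘ
        ((Finset.univ : Finset (Fin n)).val.map (fun v => G₁.degree v)).map (· + 1) := by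
    rw [degreeMultiset_step, Fintype.card_fin]
    congr!
  have hkey : (1 : ℕ) ::ₘ (n + 1) ::ₘ
        ((Finset.univ : Finset (Fin n)).val.map (fun v => G₁.degree v)).map (· + 1)
      = 1 ::ₘ (n + 1) ::ₘ a.map (· + 1) := by
    rw [← hstep, hds]
    exact hH
  have hd : (Finset.univ : Finset (Fin n)).val.map (fun v => G₁.degree v) = a := by
    have h2 := (Multiset.cons_inj_right _).mp ((Multiset.cons_inj_right _).mp hkey)
    exact Multiset.map_injective (add_left_injective 1) h2
  exact ⟨G₁, hd, ⟨φ.symm⟩⟩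
end Decompose

/-- The fixed equivalence used to transport `step` to `Fin (n + 2)`. -/
noncomputable def eOO (n : ℕ) : Fin (n + 2) ≃ Option (Option (Fin n)) :=
  (finSuccEquiv (n + 1)).trans (Equiv.optionCongr (finSuccEquiv n))

end EKS

open EKS in
theorem exactlyK_step {n k : ℕ} (hk : 1 ≤ k) (a : Multiset ℕ)
    (hcard : Multiset.card a = n) (hbd : ∀ x ∈ a, x ≤ n - 1)
    (h : exactlyKRealizations k n a) :
    exactlyKRealizations k (n + 2) (1 ::ₘ (n + 1) ::ₘ a.map (· + 1)) ∧
      ∀ H : SimpleGraph (Fin (n + 2)),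
        realizes H (1 ::ₘ (n + 1) ::ₘ a.map (· + 1)) → H.Connected := by
  classical
  obtain ⟨Gs, hGs1, hGs2, hGs3⟩ := h
  refine ⟨⟨fun i => SimpleGraph.comap (eOO n).toEmbedding (step (Gs i)), ?_, ?_, ?_⟩, ?_⟩
  · intro i
    have e1 := degreeMultiset_iso (SimpleGraph.Iso.comap (eOO n) (step (Gs i)))
    have e2 := degreeMultiset_step (Gs i)
    have e3 : (Finset.univ : Finset (Fin n)).val.map (fun v => (Gs i).degree v) = a := hGs1 i
    show (Finset.univ : Finset (Fin (n + 2))).val.map _ = _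
    exact e1.trans (by rw [e2, Fintype.card_fin, e3])
  · intro i j hf
    obtain ⟨f⟩ := hf
    have f' : step (Gs i) ≃g step (Gs j) :=
      ((SimpleGraph.Iso.comap (eOO n) (step (Gs i))).symm.trans f).trans
        (SimpleGraph.Iso.comap (eOO n) (step (Gs j)))
    rcases Nat.eq_zero_or_pos n with hn0 | hn
    · apply hGs2 i j
      subst hn0
      have hEq : Gs i = Gs j := by
        ext x y
        exact x.elim0
      rw [hEq]
      exact ⟨RelIso.refl _⟩
    · exact hGs2 i j (step_inj hn _ _ f')
  · intro H hH
    obtain ⟨G, hGa, ⟨ψ⟩⟩ := decompose a hcard H hH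
    obtain ⟨i, ⟨χ⟩⟩ := hGs3 G hGa
    exact ⟨i, ⟨(ψ.trans (stepIso χ)).trans
      (SimpleGraph.Iso.comap (eOO n) (step (Gs i))).symm⟩⟩
  · intro H hH
    exact connected_of_realizes H a hH
end

section
/- Let S₀ be a graphical sequence 0 ≤ a₁ ≤ a₂ ≤ ⋯ ≤ aₙ realized by exactly k ≥ 1 pairwise non-isomorphic graphs. Then for every positive integer i, the sequence S₀⁽ⁱ⁾ : 1, 2, …, i, a₁+i, a₂+i, …, aₙ+i, n+i, n+i+1, …, n+2i−1 is graphical, every graph realizing it is connected, and it is realized by exactly k pairwise non-isomorphic graphs. -/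
open scoped Classical

/-- The sequence `S₀⁽ⁱ⁾ : 1, 2, …, i, a₁+i, …, aₙ+i, n+i, n+i+1, …, n+2i-1`. -/
def seqIter (a : Multiset ℕ) (n i : ℕ) : Multiset ℕ :=
  (Multiset.range i).map (· + 1) + a.map (· + i) +
    (Multiset.range i).map (fun j => n + i + j)

namespace AuxKR

variable {m : ℕ}

/-- apex vertex -/
def apx (m : ℕ) : Fin (m + 2) := ⟨m + 1, by omega⟩

/-- pendant vertex -/
def pnd (m : ℕ) : Fin (m + 2) := ⟨m, by omega⟩

/-- embedding of old vertices -/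
def emb (m : ℕ) (a : Fin m) : Fin (m + 2) := ⟨a, by omega⟩

lemma emb_lt (a : Fin m) : ((emb m a : Fin (m+2)) : ℕ) < m := a.2

/-- Cone over `G` plus a pendant vertex: `T G = K₁ + (G ⊔ K₁)`. -/
def T (G : SimpleGraph (Fin m)) : SimpleGraph (Fin (m + 2)) where
  Adj x y := x ≠ y ∧ ((x : ℕ) = m + 1 ∨ (y : ℕ) = m + 1 ∨
      ∃ (hx : (x : ℕ) < m) (hy : (y : ℕ) < m), G.Adj ⟨x, hx⟩ ⟨y, hy⟩)
  symm := by
    constructor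
    rintro x y ⟨hne, h⟩
    refine ⟨hne.symm, ?_⟩
    rcases h with h | h | ⟨hx, hy, h⟩
    · exact Or.inr (Or.inl h)
    · exact Or.inl h
    · exact Or.inr (Or.inr ⟨hy, hx, h.symm⟩)
  loopless := ⟨fun x h => h.1 rfl⟩

lemma T_adj (G : SimpleGraph (Fin m)) (x y : Fin (m+2)) :
    (T G).Adj x y ↔ x ≠ y ∧ ((x : ℕ) = m + 1 ∨ (y : ℕ) = m + 1 ∨
      ∃ (hx : (x : ℕ) < m) (hy : (y : ℕ) < m), G.Adj ⟨x, hx⟩ ⟨y, hy⟩) := Iff.rfl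

lemma T_adj_apx (G : SimpleGraph (Fin m)) (y : Fin (m+2)) :
    (T G).Adj (apx m) y ↔ y ≠ apx m := by
  rw [T_adj]
  constructor
  · rintro ⟨hne, -⟩; exact hne.symm
  · intro h; exact ⟨h.symm, Or.inl rfl⟩

lemma T_adj_pnd (G : SimpleGraph (Fin m)) (y : Fin (m+2)) :
    (T G).Adj (pnd m) y ↔ y = apx m := by
  rw [T_adj]
  constructor
  · rintro ⟨hne, h | h | ⟨hx, -⟩⟩
    · exact absurd h (by simp [pnd])
    · exact Fin.ext h
    · exact absurd hx (by simp [pnd])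
  · rintro rfl
    exact ⟨by simp [pnd, apx, Fin.ext_iff], Or.inr (Or.inl rfl)⟩

lemma T_adj_emb (G : SimpleGraph (Fin m)) (a b : Fin m) :
    (T G).Adj (emb m a) (emb m b) ↔ G.Adj a b := by
  rw [T_adj]
  constructor
  · rintro ⟨hne, h | h | ⟨hx, hy, h⟩⟩
    · exact absurd h (by have := a.2; simp [emb]; omega)
    · exact absurd h (by have := b.2; simp [emb]; omega)
    · exact h
  · intro h
    refine ⟨?_, Or.inr (Or.inr ⟨a.2, b.2, by simpa [emb] using h⟩)⟩
    simp only [emb, ne_eq, Fin.ext_iff]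
    exact fun hab => G.ne_of_adj h (Fin.ext hab)

end AuxKR

namespace AuxKR

variable {m : ℕ}

lemma emb_injective : Function.Injective (emb m) := by
  intro a b h
  have h2 := Fin.ext_iff.mp h
  simp only [emb] at h2
  exact Fin.ext h2

def embEmb (m : ℕ) : Fin m ↪ Fin (m + 2) := ⟨emb m, emb_injective⟩

lemma emb_ne_apx (a : Fin m) : emb m a ≠ apx m := by
  have := a.2; simp [emb, apx, Fin.ext_iff]; omega

lemma emb_ne_pnd (a : Fin m) : emb m a ≠ pnd m := by
  have := a.2; simp [emb, pnd, Fin.ext_iff]; omega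

lemma pnd_ne_apx : pnd m ≠ apx m := by simp [pnd, apx, Fin.ext_iff]

lemma T_adj_emb' (G : SimpleGraph (Fin m)) (v : Fin m) (y : Fin (m+2)) :
    (T G).Adj (emb m v) y ↔ (y = apx m ∨ ∃ hy : (y : ℕ) < m, G.Adj v ⟨y, hy⟩) := by
  rw [T_adj]
  constructor
  · rintro ⟨hne, h | h | ⟨hx, hy, h⟩⟩
    · exact absurd h (by have := v.2; simp [emb]; omega)
    · exact Or.inl (Fin.ext h)
    · exact Or.inr ⟨hy, h⟩
  · rintro (rfl | ⟨hy, h⟩)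
    · exact ⟨emb_ne_apx v, Or.inr (Or.inl rfl)⟩
    · refine ⟨?_, Or.inr (Or.inr ⟨v.2, hy, h⟩)⟩
      intro hcon
      apply G.ne_of_adj h
      have : (v : ℕ) = (y : ℕ) := congrArg Fin.val hcon
      exact Fin.ext this

lemma deg_apx (G : SimpleGraph (Fin m)) : (T G).degree (apx m) = m + 1 := by
  have h : (T G).neighborFinset (apx m) = Finset.univ.erase (apx m) := by
    ext y
    simp [SimpleGraph.mem_neighborFinset, T_adj_apx, Finset.mem_erase]
  rw [← SimpleGraph.card_neighborFinset_eq_degree, h,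
    Finset.card_erase_of_mem (Finset.mem_univ _), Finset.card_univ, Fintype.card_fin]
  omega

lemma deg_pnd (G : SimpleGraph (Fin m)) : (T G).degree (pnd m) = 1 := by
  have h : (T G).neighborFinset (pnd m) = {apx m} := by
    ext y
    simp [SimpleGraph.mem_neighborFinset, T_adj_pnd]
  rw [← SimpleGraph.card_neighborFinset_eq_degree, h, Finset.card_singleton]

lemma deg_emb (G : SimpleGraph (Fin m)) (v : Fin m) :
    (T G).degree (emb m v) = G.degree v + 1 := by
  have h : (T G).neighborFinset (emb m v) =
      insert (apx m) ((G.neighborFinset v).map (embEmb m)) := by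
    ext y
    simp only [SimpleGraph.mem_neighborFinset, T_adj_emb', Finset.mem_insert, Finset.mem_map,
      embEmb, Function.Embedding.coeFn_mk]
    constructor
    · rintro (rfl | ⟨hy, h⟩)
      · exact Or.inl rfl
      · exact Or.inr ⟨⟨y, hy⟩, h, Fin.ext rfl⟩
    · rintro (rfl | ⟨a, ha, rfl⟩)
      · exact Or.inl rfl
      · exact Or.inr ⟨a.2, ha⟩
  rw [← SimpleGraph.card_neighborFinset_eq_degree, h,
    Finset.card_insert_of_notMem, Finset.card_map, SimpleGraph.card_neighborFinset_eq_degree]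
  simp only [Finset.mem_map, not_exists]
  rintro a ⟨-, hcon⟩
  exact emb_ne_apx a hcon

lemma univ_map_two (f : Fin (m+2) → ℕ) :
    Finset.univ.val.map f = f (apx m) ::ₘ f (pnd m) ::ₘ Finset.univ.val.map (fun a => f (emb m a)) := by
  rw [Fin.univ_castSuccEmb, Finset.cons_val, Multiset.map_cons, Finset.map_val, Multiset.map_map]
  rw [Fin.univ_castSuccEmb, Finset.cons_val, Multiset.map_cons, Finset.map_val, Multiset.map_map]
  rfl

/-- new degree sequence -/
def newSeq (s : Multiset ℕ) (m : ℕ) : Multiset ℕ := (m + 1) ::ₘ 1 ::ₘ s.map (· + 1)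

lemma realizes_T {G : SimpleGraph (Fin m)} {s : Multiset ℕ} (h : realizes G s) :
    realizes (T G) (newSeq s m) := by
  unfold realizes at h ⊢
  rw [univ_map_two, deg_apx, deg_pnd, newSeq]
  congr 2
  rw [← h, Multiset.map_map]
  exact Multiset.map_congr rfl (fun a _ => deg_emb G a)

end AuxKR

namespace AuxKR

variable {m : ℕ}

lemma iso_degree {V W : Type*} [Fintype V] [Fintype W] {G : SimpleGraph V}
    {H : SimpleGraph W} (e : G ≃g H) (v : V) : H.degree (e v) = G.degree v := by
  rw [← SimpleGraph.card_neighborSet_eq_degree, ← SimpleGraph.card_neighborSet_eq_degree]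
  exact Fintype.card_congr (e.mapNeighborSet v).symm

lemma realizes_iso {V W : Type*} [Fintype V] [Fintype W] {G : SimpleGraph V}
    {H : SimpleGraph W} (e : G ≃g H) {s : Multiset ℕ} (h : realizes G s) :
    realizes H s := by
  unfold realizes at h ⊢
  rw [← h]
  have huniv : (Finset.univ : Finset W) = Finset.univ.map e.toEquiv.toEmbedding :=
    (Finset.map_univ_equiv e.toEquiv).symm
  rw [huniv, Finset.map_val, Multiset.map_map]
  exact Multiset.map_congr rfl (fun v _ => iso_degree e v)

/-- Swapping two nonadjacent vertices with the same neighborhoods is an automorphism. -/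
lemma swap_aut {V : Type*} [DecidableEq V] (G : SimpleGraph V) (u v : V)
    (huv : ¬ G.Adj u v) (hN : ∀ z, G.Adj u z ↔ G.Adj v z) :
    ∀ x y, G.Adj (Equiv.swap u v x) (Equiv.swap u v y) ↔ G.Adj x y := by
  have hN' : ∀ z, G.Adj z u ↔ G.Adj z v := by
    intro z
    rw [SimpleGraph.adj_comm, hN z, SimpleGraph.adj_comm]
  have key : ∀ x y, G.Adj x y → G.Adj (Equiv.swap u v x) (Equiv.swap u v y) := by
    intro x y hxy
    rcases eq_or_ne x u with hx | hx
    · rcases eq_or_ne y u with hy | hy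
      · exact absurd hxy (by rw [hx, hy]; exact G.loopless.irrefl u)
      · rcases eq_or_ne y v with hy' | hy'
        · exact absurd hxy (by rw [hx, hy']; exact huv)
        · rw [hx, Equiv.swap_apply_left, Equiv.swap_apply_of_ne_of_ne hy hy']
          rw [hx] at hxy
          exact (hN y).mp hxy
    · rcases eq_or_ne x v with hx' | hx'
      · rcases eq_or_ne y u with hy | hy
        · exact absurd hxy (by rw [hx', hy]; exact fun hc => huv (G.adj_symm hc))
        · rcases eq_or_ne y v with hy' | hy'
          · exact absurd hxy (by rw [hx', hy']; exact G.loopless.irrefl v)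
          · rw [hx', Equiv.swap_apply_right, Equiv.swap_apply_of_ne_of_ne hy hy']
            rw [hx'] at hxy
            exact (hN y).mpr hxy
      · rw [Equiv.swap_apply_of_ne_of_ne hx hx']
        rcases eq_or_ne y u with hy | hy
        · rw [hy, Equiv.swap_apply_left]
          rw [hy] at hxy
          exact (hN' x).mp hxy
        · rcases eq_or_ne y v with hy' | hy'
          · rw [hy', Equiv.swap_apply_right]
            rw [hy'] at hxy
            exact (hN' x).mpr hxy
          · rw [Equiv.swap_apply_of_ne_of_ne hy hy']
            exact hxy
  intro x y
  constructor
  · intro h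
    have h2 := key _ _ h
    rwa [Equiv.swap_apply_self, Equiv.swap_apply_self] at h2
  · exact key x y

lemma eq_pnd_or_apx (x : Fin (m+2)) (h : ¬ (x : ℕ) < m) : x = pnd m ∨ x = apx m := by
  have h2 := x.2
  rcases Nat.lt_or_ge (x : ℕ) (m+1) with h' | h'
  · exact Or.inl (Fin.ext (by simp [pnd]; omega))
  · exact Or.inr (Fin.ext (by simp [apx]; omega))

lemma ne_apx_of_lt {x : Fin (m+2)} (h : (x : ℕ) < m) : x ≠ apx m := by
  simp [apx, Fin.ext_iff]; omega

/-- extend an equivalence of `Fin m` to `Fin (m+2)` fixing `pnd` and `apx`. -/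
def extEquiv (e : Fin m ≃ Fin m) : Fin (m+2) ≃ Fin (m+2) where
  toFun x := if h : (x : ℕ) < m then emb m (e ⟨x, h⟩) else x
  invFun x := if h : (x : ℕ) < m then emb m (e.symm ⟨x, h⟩) else x
  left_inv x := by
    by_cases h : (x : ℕ) < m
    · simp only [h, dif_pos]
      have h2 : ((emb m (e ⟨x, h⟩) : Fin (m+2)) : ℕ) < m := (e ⟨x, h⟩).2
      simp only [h2, dif_pos]
      have h3 : (⟨((emb m (e ⟨x, h⟩) : Fin (m+2)) : ℕ), h2⟩ : Fin m) = e ⟨x, h⟩ := Fin.ext rfl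
      rw [h3, Equiv.symm_apply_apply]
      exact Fin.ext rfl
    · dsimp only
      rw [dif_neg h, dif_neg h]
  right_inv x := by
    by_cases h : (x : ℕ) < m
    · simp only [h, dif_pos]
      have h2 : ((emb m (e.symm ⟨x, h⟩) : Fin (m+2)) : ℕ) < m := (e.symm ⟨x, h⟩).2
      simp only [h2, dif_pos]
      have h3 : (⟨((emb m (e.symm ⟨x, h⟩) : Fin (m+2)) : ℕ), h2⟩ : Fin m) = e.symm ⟨x, h⟩ :=
        Fin.ext rfl
      rw [h3, Equiv.apply_symm_apply]
      exact Fin.ext rfl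
    · dsimp only
      rw [dif_neg h, dif_neg h]

lemma T_adj_lt {G : SimpleGraph (Fin m)} {x y : Fin (m+2)} (hx : (x : ℕ) < m)
    (hy : (y : ℕ) < m) : (T G).Adj x y ↔ G.Adj ⟨x, hx⟩ ⟨y, hy⟩ := by
  rw [T_adj]
  constructor
  · rintro ⟨hne, h | h | ⟨hx', hy', h⟩⟩
    · exact absurd h (by omega)
    · exact absurd h (by omega)
    · exact h
  · intro h
    refine ⟨?_, Or.inr (Or.inr ⟨hx, hy, h⟩)⟩
    intro hc
    subst hc
    exact G.ne_of_adj h rfl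

lemma extEquiv_lt (e : Fin m ≃ Fin m) {x : Fin (m+2)} (h : (x : ℕ) < m) :
    extEquiv e x = emb m (e ⟨x, h⟩) := by simp [extEquiv, h]

lemma extEquiv_ge (e : Fin m ≃ Fin m) {x : Fin (m+2)} (h : ¬ (x : ℕ) < m) :
    extEquiv e x = x := by simp [extEquiv, h]

/-- `T` is functorial on isomorphisms. -/
noncomputable def isoT {G G' : SimpleGraph (Fin m)} (e : G ≃g G') : T G ≃g T G' where
  toEquiv := extEquiv e.toEquiv
  map_rel_iff' := by
    intro x y
    show (T G').Adj (extEquiv e.toEquiv x) (extEquiv e.toEquiv y) ↔ (T G).Adj x y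
    by_cases hx : (x : ℕ) < m <;> by_cases hy : (y : ℕ) < m
    · rw [extEquiv_lt _ hx, extEquiv_lt _ hy, T_adj_emb, T_adj_lt hx hy]
      exact e.map_rel_iff
    · rw [extEquiv_lt _ hx, extEquiv_ge _ hy]
      rcases eq_pnd_or_apx y hy with rfl | rfl
      · rw [SimpleGraph.adj_comm, SimpleGraph.adj_comm (T G), T_adj_pnd, T_adj_pnd]
        simp only [iff_iff_implies_and_implies]
        constructor
        · intro h; exact absurd h (emb_ne_apx _)
        · intro h; exact absurd h (ne_apx_of_lt hx)
      · rw [SimpleGraph.adj_comm, SimpleGraph.adj_comm (T G), T_adj_apx, T_adj_apx]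
        simp only [ne_eq]
        constructor
        · intro _; exact ne_apx_of_lt hx
        · intro _; exact emb_ne_apx _
    · rw [extEquiv_lt _ hy, extEquiv_ge _ hx]
      rcases eq_pnd_or_apx x hx with rfl | rfl
      · rw [T_adj_pnd, T_adj_pnd]
        constructor
        · intro h; exact absurd h (emb_ne_apx _)
        · intro h; exact absurd h (ne_apx_of_lt hy)
      · rw [T_adj_apx, T_adj_apx]
        constructor
        · intro _; exact ne_apx_of_lt hy
        · intro _; exact emb_ne_apx _
    · rw [extEquiv_ge _ hx, extEquiv_ge _ hy]
      rcases eq_pnd_or_apx x hx with rfl | rfl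
      · rw [T_adj_pnd, T_adj_pnd]
      · rw [T_adj_apx, T_adj_apx]

end AuxKR

namespace AuxKR

variable {m : ℕ}

lemma dom_of_degree {V : Type*} [Fintype V] (G : SimpleGraph V) (v : V)
    (h : G.degree v = Fintype.card V - 1) : ∀ z, G.Adj v z ↔ z ≠ v := by
  have hsub : G.neighborFinset v ⊆ Finset.univ.erase v := by
    intro z hz
    rw [SimpleGraph.mem_neighborFinset] at hz
    exact Finset.mem_erase.mpr ⟨(G.ne_of_adj hz).symm, Finset.mem_univ _⟩
  have hcard : (Finset.univ.erase v).card ≤ (G.neighborFinset v).card := by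
    rw [SimpleGraph.card_neighborFinset_eq_degree, h,
      Finset.card_erase_of_mem (Finset.mem_univ _), Finset.card_univ]
  have heq := Finset.eq_of_subset_of_card_le hsub hcard
  intro z
  constructor
  · exact fun hz => (G.ne_of_adj hz).symm
  · intro hz
    have : z ∈ G.neighborFinset v := by
      rw [heq]
      exact Finset.mem_erase.mpr ⟨hz, Finset.mem_univ _⟩
    exact (SimpleGraph.mem_neighborFinset _ _ _).mp this

lemma nbr_singleton {V : Type*} [Fintype V] (G : SimpleGraph V) {z w : V}
    (h1 : G.degree z = 1) (h2 : G.Adj z w) : ∀ y, G.Adj z y ↔ y = w := by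
  have hsub : {w} ⊆ G.neighborFinset z := by
    intro y hy
    rw [Finset.mem_singleton] at hy
    subst hy
    exact (SimpleGraph.mem_neighborFinset _ _ _).mpr h2
  have hcard : (G.neighborFinset z).card ≤ ({w} : Finset V).card := by
    rw [SimpleGraph.card_neighborFinset_eq_degree, h1, Finset.card_singleton]
  have heq := (Finset.eq_of_subset_of_card_le hsub hcard).symm
  intro y
  rw [← SimpleGraph.mem_neighborFinset, heq, Finset.mem_singleton]

lemma deg_of_lt {G' : SimpleGraph (Fin m)} {z : Fin (m+2)} (h : (z : ℕ) < m) :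
    (T G').degree z = G'.degree ⟨z, h⟩ + 1 := by
  exact deg_emb G' ⟨z, h⟩

/-- The apex is the unique vertex of full degree when `m ≥ 1`. -/
lemma apx_unique {G' : SimpleGraph (Fin m)} (hm : 0 < m) (z : Fin (m+2))
    (hz : (T G').degree z = m + 1) : z = apx m := by
  by_cases h : (z : ℕ) < m
  · exfalso
    rw [deg_of_lt h] at hz
    have := G'.degree_lt_card_verts ⟨z, h⟩
    rw [Fintype.card_fin] at this
    omega
  · rcases eq_pnd_or_apx z h with rfl | rfl
    · rw [deg_pnd] at hz; omega
    · rfl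

lemma recover {s : Multiset ℕ} (H : SimpleGraph (Fin (m+2))) (hH : realizes H (newSeq s m)) :
    ∃ G : SimpleGraph (Fin m), Nonempty (H ≃g T G) ∧ realizes G s := by
  have ht : Finset.univ.val.map (fun v => H.degree v) = newSeq s m := hH
  -- the dominating vertex
  obtain ⟨w, -, hw⟩ : ∃ w ∈ (Finset.univ.val : Multiset (Fin (m+2))), H.degree w = m + 1 := by
    apply Multiset.mem_map.mp
    rw [ht]
    simp [newSeq]
  have hwmem : w ∈ (Finset.univ.val : Multiset (Fin (m+2))) := Finset.mem_univ_val _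
  have hcons := (Multiset.cons_erase hwmem).symm
  have ht2 : (m+1) ::ₘ (Finset.univ.val.erase w).map (fun v => H.degree v) = newSeq s m := by
    rw [← hw, ← ht, hcons, Multiset.map_cons, Multiset.erase_cons_head]
  rw [newSeq, Multiset.cons_inj_right] at ht2
  -- the pendant vertex
  obtain ⟨u, humem, hu⟩ : ∃ u ∈ Finset.univ.val.erase w, H.degree u = 1 := by
    apply Multiset.mem_map.mp
    rw [ht2]
    simp
  have huw : u ≠ w := ((Finset.univ.nodup.mem_erase_iff).mp humem).1
  have hdom : ∀ z, H.Adj w z ↔ z ≠ w := dom_of_degree H w (by rw [hw, Fintype.card_fin]; omega)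
  have hadj_uw : H.Adj u w := ((hdom u).mpr huw).symm
  have hpend : ∀ z, H.Adj u z ↔ z = w := nbr_singleton H hu hadj_uw
  -- the relabeling equivalence
  set τ₁ : Equiv.Perm (Fin (m+2)) := Equiv.swap (apx m) w with hτ₁
  set u' : Fin (m+2) := τ₁.symm u with hu'
  set τ₂ : Equiv.Perm (Fin (m+2)) := Equiv.swap (pnd m) u' with hτ₂
  set σ : Equiv.Perm (Fin (m+2)) := τ₂.trans τ₁ with hσ
  have hu'apx : u' ≠ apx m := by
    intro hc
    apply huw
    have : τ₁ u' = τ₁ (apx m) := congrArg τ₁ hc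
    rwa [hu', Equiv.apply_symm_apply, hτ₁, Equiv.swap_apply_left] at this
  have hσapx : σ (apx m) = w := by
    rw [hσ, Equiv.trans_apply, hτ₂, Equiv.swap_apply_of_ne_of_ne pnd_ne_apx.symm (Ne.symm hu'apx),
      hτ₁, Equiv.swap_apply_left]
  have hσpnd : σ (pnd m) = u := by
    rw [hσ, Equiv.trans_apply, hτ₂, Equiv.swap_apply_left, hu', Equiv.apply_symm_apply]
  -- the inner graph
  set G' : SimpleGraph (Fin m) := SimpleGraph.comap (fun b : Fin m => σ (emb m b)) H with hG'
  have hσw : ∀ z, σ z = w ↔ z = apx m := by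
    intro z
    constructor
    · intro hc; exact σ.injective (hc.trans hσapx.symm)
    · rintro rfl; exact hσapx
  have hσu : ∀ z, σ z = u ↔ z = pnd m := by
    intro z
    constructor
    · intro hc; exact σ.injective (hc.trans hσpnd.symm)
    · rintro rfl; exact hσpnd
  have key : ∀ x y, H.Adj (σ x) (σ y) ↔ (T G').Adj x y := by
    have main : ∀ y x : Fin (m+2), ¬ (x : ℕ) < m → (H.Adj (σ x) (σ y) ↔ (T G').Adj x y) := by
      intro y x hx
      rcases eq_pnd_or_apx x hx with rfl | rfl
      · rw [hσpnd, hpend, T_adj_pnd]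
        exact hσw y
      · rw [hσapx, hdom, T_adj_apx]
        exact not_congr (hσw y)
    intro x y
    by_cases hx : (x : ℕ) < m
    · by_cases hy : (y : ℕ) < m
      · rw [T_adj_lt hx hy]
        exact Iff.rfl
      · rw [H.adj_comm, (T G').adj_comm]
        exact main x y hy
    · exact main y x hx
  have iso : T G' ≃g H := ⟨σ, key _ _⟩
  have hT : realizes (T G') (newSeq (Finset.univ.val.map (fun v => G'.degree v)) m) :=
    realizes_T rfl
  have hT2 : realizes (T G') (newSeq s m) := realizes_iso iso.symm hH
  have hts : Finset.univ.val.map (fun v => G'.degree v) = s := by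
    have heq : newSeq (Finset.univ.val.map (fun v => G'.degree v)) m = newSeq s m :=
      hT.symm.trans hT2
    rw [newSeq, newSeq, Multiset.cons_inj_right, Multiset.cons_inj_right] at heq
    exact Multiset.map_injective (add_left_injective 1) heq
  exact ⟨G', ⟨iso.symm⟩, hts⟩

end AuxKR

namespace AuxKR

variable {m : ℕ}

lemma unT {G G' : SimpleGraph (Fin m)} (φ : T G ≃g T G') : Nonempty (G ≃g G') := by
  rcases Nat.eq_zero_or_pos m with rfl | hm
  · exact ⟨⟨Equiv.refl _, fun {a b} => a.elim0⟩⟩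
  -- the apex is preserved
  have hφa : φ (apx m) = apx m := by
    apply apx_unique hm
    rw [iso_degree φ (apx m), deg_apx]
  -- swap the image of the pendant back
  have hvdeg : (T G').degree (φ (pnd m)) = 1 := by
    rw [iso_degree φ (pnd m), deg_pnd]
  have hvapx : φ (pnd m) ≠ apx m := by
    intro hc
    rw [hc, deg_apx] at hvdeg
    omega
  have hpapx : (pnd m : Fin (m+2)) ≠ apx m := pnd_ne_apx
  have hnbr : ∀ z : Fin (m+2), z ≠ apx m → (T G').degree z = 1 →
      (∀ y, (T G').Adj z y ↔ y = apx m) := by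
    intro z hz hdeg
    have hadj : (T G').Adj z (apx m) := by
      rw [(T G').adj_comm, T_adj_apx]
      exact hz
    exact nbr_singleton _ hdeg hadj
  have hNv := hnbr _ hvapx hvdeg
  have hNp := hnbr (pnd m) hpapx (deg_pnd G')
  have hnadj : ¬ (T G').Adj (φ (pnd m)) (pnd m) := by
    intro hc
    exact hpapx ((hNv _).mp hc)
  have hsw := swap_aut (T G') (φ (pnd m)) (pnd m) hnadj
    (fun z => (hNv z).trans (hNp z).symm)
  set e₀ : T G' ≃g T G' := ⟨Equiv.swap (φ (pnd m)) (pnd m), hsw _ _⟩ with he₀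
  set ψ : T G ≃g T G' := φ.trans e₀ with hψ
  have hψa : ψ (apx m) = apx m := by
    show e₀ (φ (apx m)) = apx m
    rw [hφa]
    show Equiv.swap (φ (pnd m)) (pnd m) (apx m) = apx m
    rw [Equiv.swap_apply_of_ne_of_ne (Ne.symm hvapx) (Ne.symm pnd_ne_apx)]
  have hψp : ψ (pnd m) = pnd m := by
    show e₀ (φ (pnd m)) = pnd m
    show Equiv.swap (φ (pnd m)) (pnd m) (φ (pnd m)) = pnd m
    rw [Equiv.swap_apply_left]
  have hψa' : ψ.symm (apx m) = apx m := by
    conv_lhs => rw [← hψa]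
    rw [RelIso.symm_apply_apply]
  have hψp' : ψ.symm (pnd m) = pnd m := by
    conv_lhs => rw [← hψp]
    rw [RelIso.symm_apply_apply]
  have hlt : ∀ a : Fin m, ((ψ (emb m a) : Fin (m+2)) : ℕ) < m := by
    intro a
    have h1 : ψ (emb m a) ≠ apx m := by
      intro hc
      exact emb_ne_apx a (ψ.injective (hc.trans hψa.symm))
    have h2 : ψ (emb m a) ≠ pnd m := by
      intro hc
      exact emb_ne_pnd a (ψ.injective (hc.trans hψp.symm))
    have h1' : ((ψ (emb m a) : Fin (m+2)) : ℕ) ≠ m + 1 := fun hc => h1 (Fin.ext hc)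
    have h2' : ((ψ (emb m a) : Fin (m+2)) : ℕ) ≠ m := fun hc => h2 (Fin.ext hc)
    have := (ψ (emb m a) : Fin (m+2)).2
    omega
  have hlt' : ∀ a : Fin m, ((ψ.symm (emb m a) : Fin (m+2)) : ℕ) < m := by
    intro a
    have h1 : ψ.symm (emb m a) ≠ apx m := by
      intro hc
      exact emb_ne_apx a (ψ.symm.injective (hc.trans hψa'.symm))
    have h2 : ψ.symm (emb m a) ≠ pnd m := by
      intro hc
      exact emb_ne_pnd a (ψ.symm.injective (hc.trans hψp'.symm))
    have h1' : ((ψ.symm (emb m a) : Fin (m+2)) : ℕ) ≠ m + 1 := fun hc => h1 (Fin.ext hc)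
    have h2' : ((ψ.symm (emb m a) : Fin (m+2)) : ℕ) ≠ m := fun hc => h2 (Fin.ext hc)
    have := (ψ.symm (emb m a) : Fin (m+2)).2
    omega
  set e : Fin m ≃ Fin m :=
    { toFun := fun a => ⟨(ψ (emb m a) : Fin (m+2)), hlt a⟩
      invFun := fun b => ⟨(ψ.symm (emb m b) : Fin (m+2)), hlt' b⟩
      left_inv := by
        intro a
        apply Fin.ext
        show ((ψ.symm (emb m ⟨(ψ (emb m a) : Fin (m+2)), hlt a⟩) : Fin (m+2)) : ℕ) = (a : ℕ)
        have hee : emb m (⟨(ψ (emb m a) : Fin (m+2)), hlt a⟩ : Fin m) = ψ (emb m a) :=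
          Fin.ext rfl
        rw [hee, RelIso.symm_apply_apply]
        rfl
      right_inv := by
        intro a
        apply Fin.ext
        show ((ψ (emb m ⟨(ψ.symm (emb m a) : Fin (m+2)), hlt' a⟩) : Fin (m+2)) : ℕ) = (a : ℕ)
        have hee : emb m (⟨(ψ.symm (emb m a) : Fin (m+2)), hlt' a⟩ : Fin m) = ψ.symm (emb m a) :=
          Fin.ext rfl
        rw [hee, RelIso.apply_symm_apply]
        rfl } with he
  refine ⟨⟨e, ?_⟩⟩
  intro a b
  show G'.Adj (e a) (e b) ↔ G.Adj a b
  have hea : emb m (e a) = ψ (emb m a) := Fin.ext rfl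
  have heb : emb m (e b) = ψ (emb m b) := Fin.ext rfl
  rw [← T_adj_emb G', hea, heb, ψ.map_rel_iff, T_adj_emb]

end AuxKR

namespace AuxKR

/-- A graph with a vertex of full degree is connected. -/
lemma connected_of_full_degree {V : Type*} [Fintype V] (G : SimpleGraph V) (v : V)
    (h : G.degree v = Fintype.card V - 1) : G.Connected := by
  have hdom := dom_of_degree G v h
  have hreach : ∀ x, G.Reachable v x := by
    intro x
    rcases eq_or_ne x v with rfl | hx
    · exact SimpleGraph.Reachable.refl _
    · exact ((hdom x).mpr hx).reachable
  rw [SimpleGraph.connected_iff]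
  exact ⟨fun x y => (hreach x).symm.trans (hreach y), ⟨v⟩⟩

lemma step {k m : ℕ} {s : Multiset ℕ} (h : exactlyKRealizations k m s) :
    exactlyKRealizations k (m+2) (newSeq s m) := by
  obtain ⟨Gs, h1, h2, h3⟩ := h
  refine ⟨fun j => T (Gs j), fun j => realizes_T (h1 j), ?_, ?_⟩
  · rintro i j ⟨φ⟩
    exact h2 i j (unT φ)
  · intro H hH
    obtain ⟨G0, ⟨ι⟩, hG0⟩ := recover H hH
    obtain ⟨j, ⟨κ⟩⟩ := h3 G0 hG0
    exact ⟨j, ⟨ι.trans (isoT κ)⟩⟩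

lemma mrange_succ' (i : ℕ) :
    Multiset.range (i+1) = 0 ::ₘ (Multiset.range i).map (· + 1) := by
  show (↑(List.range (i+1)) : Multiset ℕ) = _
  rw [List.range_succ_eq_map]
  simp [Multiset.range, Nat.succ_eq_add_one]

lemma seqIter_succ (a : Multiset ℕ) (n i : ℕ) :
    seqIter a n (i+1) = newSeq (seqIter a n i) (n + 2*i) := by
  unfold seqIter newSeq
  have c1 : (Multiset.range (i+1)).map (· + 1) =
      1 ::ₘ (Multiset.range i).map ((· + 1) ∘ (· + 1)) := by
    rw [mrange_succ', Multiset.map_cons, Multiset.map_map]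
  have c3 : (Multiset.range (i+1)).map (fun j => n + (i+1) + j) =
      (n + 2*i + 1) ::ₘ (Multiset.range i).map ((· + 1) ∘ (fun j => n + i + j)) := by
    rw [Multiset.range_succ, Multiset.map_cons]
    congr 1
    · omega
    · apply Multiset.map_congr rfl
      intro x _
      simp only [Function.comp]
      omega
  have c2 : a.map (fun x => x + (i+1)) = a.map ((· + 1) ∘ (· + i)) := by
    apply Multiset.map_congr rfl
    intro x _
    simp only [Function.comp]
    omega
  rw [c1, c2, c3, Multiset.map_add, Multiset.map_add, Multiset.map_map, Multiset.map_map,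
    Multiset.map_map]
  simp only [← Multiset.singleton_add]
  abel

end AuxKR

theorem main_theorem {n k : ℕ} (hk : 1 ≤ k) (a : Multiset ℕ)
    (hcard : Multiset.card a = n)
    (h : exactlyKRealizations k n a) :
    ∀ i : ℕ, 1 ≤ i →
      (∃ G : SimpleGraph (Fin (n + 2 * i)), realizes G (seqIter a n i)) ∧
      (∀ G : SimpleGraph (Fin (n + 2 * i)), realizes G (seqIter a n i) →
        G.Connected) ∧
      exactlyKRealizations k (n + 2 * i) (seqIter a n i) := by
  have key : ∀ i : ℕ, exactlyKRealizations k (n + 2*i) (seqIter a n i) := by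
    intro i
    induction i with
    | zero =>
      have h0 : seqIter a n 0 = a := by
        unfold seqIter
        simp
      rw [h0]
      exact h
    | succ i ih =>
      have h1 : n + 2*(i+1) = (n + 2*i) + 2 := by ring
      rw [h1, AuxKR.seqIter_succ]
      exact AuxKR.step ih
  intro i hi
  obtain ⟨Gs, h1, h2, h3⟩ := key i
  refine ⟨⟨Gs ⟨0, hk⟩, h1 _⟩, ?_, key i⟩
  intro G hG
  have hmem : (n + 2*i - 1) ∈ seqIter a n i := by
    unfold seqIter
    rw [Multiset.mem_add]
    right
    rw [Multiset.mem_map]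
    exact ⟨i - 1, by rw [Multiset.mem_range]; omega, by omega⟩
  obtain ⟨v, -, hv⟩ : ∃ v ∈ (Finset.univ.val : Multiset (Fin (n + 2*i))),
      G.degree v = n + 2*i - 1 := by
    apply Multiset.mem_map.mp
    rw [hG]
    exact hmem
  exact AuxKR.connected_of_full_degree G v (by rw [hv, Fintype.card_fin])
end

section
/- For all positive even integers n, there exists exactly one simple graph (up to isomorphism) of order n realizing the degree sequence Sₙ : 1, 2, …, n/2, n/2, n/2+1, n/2+2, …, n−1 (in which every value from 1 to n−1 appears once except n/2, which appears twice). -/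
open scoped Classical

/-- The sequence `1, 2, …, n-1` with the value `n/2` repeated twice. -/
def Sn (n : ℕ) : Multiset ℕ :=
  n / 2 ::ₘ (Multiset.range (n - 1)).map (· + 1)

lemma card_Sn {n : ℕ} (hn : 0 < n) : Multiset.card (Sn n) = n := by
  simp [Sn]; omega

lemma card_of_realizes {V : Type*} [Fintype V] {G : SimpleGraph V} {n : ℕ} (hn : 0 < n)
    (h : realizes G (Sn n)) : Fintype.card V = n := by
  have h2 : Multiset.card (Finset.univ.val.map (fun v => G.degree v)) = n := by
    rw [h, card_Sn hn]
  rw [Multiset.card_map] at h2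
  exact h2

lemma deg_mem {V : Type*} [Fintype V] {G : SimpleGraph V} {s : Multiset ℕ}
    (h : realizes G s) (x : V) : G.degree x ∈ s := by
  rw [← h]; exact Multiset.mem_map_of_mem _ (Finset.mem_univ_val x)

lemma exists_deg {V : Type*} [Fintype V] {G : SimpleGraph V} {s : Multiset ℕ} {d : ℕ}
    (h : realizes G s) (hd : d ∈ s) : ∃ x : V, G.degree x = d := by
  rw [← h] at hd
  obtain ⟨x, _, hx⟩ := Multiset.mem_map.1 hd
  exact ⟨x, hx⟩

lemma one_mem_Sn {n : ℕ} (hn : 2 ≤ n) : (1:ℕ) ∈ Sn n := by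
  refine Multiset.mem_cons_of_mem ?_
  refine Multiset.mem_map.2 ⟨0, ?_, rfl⟩
  simp [Multiset.mem_range]; omega

lemma top_mem_Sn {n : ℕ} (hn : 2 ≤ n) : (n-1:ℕ) ∈ Sn n := by
  refine Multiset.mem_cons_of_mem ?_
  refine Multiset.mem_map.2 ⟨n-2, ?_, by omega⟩
  simp [Multiset.mem_range]; omega

lemma range_succ' (n : ℕ) : Multiset.range (n+1) = 0 ::ₘ (Multiset.range n).map (·+1) := by
  induction n with
  | zero => rfl
  | succ n ih =>
      calc Multiset.range (n+2) = (n+1) ::ₘ Multiset.range (n+1) := Multiset.range_succ _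
        _ = (n+1) ::ₘ (0 ::ₘ (Multiset.range n).map (·+1)) := by rw [ih]
        _ = 0 ::ₘ ((n+1) ::ₘ (Multiset.range n).map (·+1)) := Multiset.cons_swap _ _ _
        _ = 0 ::ₘ (Multiset.range (n+1)).map (·+1) := by rw [Multiset.range_succ]; simp

lemma Sn_decomp {n : ℕ} (hn : 4 ≤ n) (he : Even n) :
    Sn n = 1 ::ₘ (n-1) ::ₘ (Sn (n-2)).map (· + 1) := by
  obtain ⟨m, rfl⟩ := he
  have hm : 2 ≤ m := by omega
  unfold Sn
  have h1 : m + m - 1 = (m + m - 2) + 1 := by omega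
  have h2 : m + m - 2 = (m + m - 3) + 1 := by omega
  have h3 : (m+m)/2 = m := by omega
  have h4 : (m+m-2)/2 = m - 1 := by omega
  rw [h3, h4, h1, Multiset.range_succ, h2, range_succ']
  simp only [Multiset.map_cons, Multiset.map_map]
  have comp : ∀ k : ℕ, ((k + 1) + 1) = k + 2 := fun k => rfl
  -- goal: m ::ₘ ((m+m-2)+1) ::ₘ (0+1) ::ₘ map _ = 1 ::ₘ (m+m-1) ::ₘ (m-1+1) ::ₘ map _
  rw [show (0:ℕ)+1 = 1 from rfl, show m - 1 + 1 = m by omega]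
  have : ((fun x => x + 1) ∘ (fun x => x + 1)) = (fun x : ℕ => x + 1 + 1) := rfl
  rw [this]
  simp only [Nat.add_sub_cancel]
  have swap3 : ∀ (a b c : ℕ) (t : Multiset ℕ), a ::ₘ b ::ₘ c ::ₘ t = c ::ₘ b ::ₘ a ::ₘ t := by
    intro a b c t
    rw [Multiset.cons_swap a b, Multiset.cons_swap a c, Multiset.cons_swap b c]
  exact swap3 _ _ _ _
variable {V : Type*} [Fintype V] [DecidableEq V]

lemma adj_all_of_degree (G : SimpleGraph V) [DecidableRel G.Adj] (v : V)
    (h : G.degree v = Fintype.card V - 1) : ∀ w, w ≠ v → G.Adj v w := by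
  have hsub : G.neighborFinset v ⊆ Finset.univ.erase v := by
    intro w hw
    simp only [SimpleGraph.mem_neighborFinset] at hw
    exact Finset.mem_erase.2 ⟨(G.ne_of_adj hw).symm, Finset.mem_univ _⟩
  have hcard : (Finset.univ.erase v).card ≤ (G.neighborFinset v).card := by
    rw [Finset.card_erase_of_mem (Finset.mem_univ v), SimpleGraph.card_neighborFinset_eq_degree, h,
      Finset.card_univ]
  have heq := Finset.eq_of_subset_of_card_le hsub hcard
  intro w hw
  have : w ∈ G.neighborFinset v := by
    rw [heq]; exact Finset.mem_erase.2 ⟨hw, Finset.mem_univ _⟩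
  simpa [SimpleGraph.mem_neighborFinset] using this

lemma neighbor_unique (G : SimpleGraph V) [DecidableRel G.Adj] {u v : V}
    (h1 : G.degree u = 1) (hadj : G.Adj u v) : ∀ w, G.Adj u w → w = v := by
  have hc : (G.neighborFinset u).card = 1 := by
    rw [SimpleGraph.card_neighborFinset_eq_degree, h1]
  obtain ⟨a, ha⟩ := Finset.card_eq_one.1 hc
  intro w hw
  have hw' : w ∈ G.neighborFinset u := (SimpleGraph.mem_neighborFinset _ _ _).2 hw
  have hv' : v ∈ G.neighborFinset u := (SimpleGraph.mem_neighborFinset _ _ _).2 hadj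
  rw [ha, Finset.mem_singleton] at hw' hv'
  rw [hw', hv']
variable {V : Type*} [Fintype V] [DecidableEq V]

lemma univ_val_map_subtype (s : Finset V) :
    (Finset.univ : Finset ↥(↑s : Set V)).val.map Subtype.val = s.val := by
  refine (Multiset.Nodup.ext ?_ s.nodup).2 ?_
  · exact (Finset.univ.nodup).map Subtype.val_injective
  · intro b
    simp only [Multiset.mem_map]
    constructor
    · rintro ⟨x, -, rfl⟩; exact x.2
    · intro hb
      exact ⟨⟨b, hb⟩, Finset.mem_univ_val _, rfl⟩

lemma induce_degree (G : SimpleGraph V) {u v : V} (huv : u ≠ v)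
    (hv : ∀ w, w ≠ v → G.Adj v w) (hu : ∀ w, G.Adj u w → w = v)
    (t : Finset V) (ht : t = Finset.univ \ ({u, v} : Finset V))
    (x : ↥(↑t : Set V)) :
    (G.induce ↑t).degree x + 1 = G.degree ↑x := by
  have hxs : (x : V) ∈ Finset.univ \ ({u, v} : Finset V) := by
    rw [← ht]; exact x.2
  simp only [Finset.mem_sdiff, Finset.mem_univ, Finset.mem_insert, Finset.mem_singleton,
    true_and] at hxs
  push_neg at hxs
  obtain ⟨hxu, hxv⟩ := hxs
  have key : G.neighborFinset ↑x
      = insert v (((G.induce ↑t).neighborFinset x).image Subtype.val) := by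
    ext b
    simp only [SimpleGraph.mem_neighborFinset, Finset.mem_insert, Finset.mem_image,
      SimpleGraph.comap_adj, Function.Embedding.coe_subtype]
    constructor
    · intro h
      by_cases hb : b = v
      · exact Or.inl hb
      · refine Or.inr ⟨⟨b, ?_⟩, ?_, rfl⟩
        · have hbu : b ≠ u := by
            intro h'
            exact hxv (hu _ (h' ▸ h.symm))
          simp [ht, hbu, hb]
        · exact h
    · rintro (rfl | ⟨y, hy, rfl⟩)
      · exact (hv _ hxv).symm
      · exact hy
  have hvim : v ∉ ((G.induce ↑t).neighborFinset x).image Subtype.val := by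
    intro h
    obtain ⟨y, -, hy⟩ := Finset.mem_image.1 h
    have hy2 : (y:V) ∈ t := y.2
    rw [hy, ht] at hy2
    simp at hy2
  have hcard := congrArg Finset.card key
  rw [Finset.card_insert_of_notMem hvim,
    Finset.card_image_of_injective _ Subtype.val_injective] at hcard
  simp only [SimpleGraph.card_neighborFinset_eq_degree] at hcard
  omega

lemma adj_char (G : SimpleGraph V) {u v : V}
    (hv : ∀ w, w ≠ v → G.Adj v w) (hu : ∀ w, G.Adj u w → w = v) (x y : V) :
    G.Adj x y ↔ ((x = v ∧ y ≠ v) ∨ (y = v ∧ x ≠ v) ∨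
      (x ≠ u ∧ x ≠ v ∧ y ≠ u ∧ y ≠ v ∧ G.Adj x y)) := by
  constructor
  · intro h
    by_cases hx : x = v
    · exact Or.inl ⟨hx, fun hy => G.ne_of_adj h (hx.trans hy.symm)⟩
    by_cases hy : y = v
    · exact Or.inr (Or.inl ⟨hy, hx⟩)
    refine Or.inr (Or.inr ⟨?_, hx, ?_, hy, h⟩)
    · intro h'; exact hy (hu y (h' ▸ h))
    · intro h'; exact hx (hu x (h' ▸ h.symm))
  · rintro (⟨rfl, h⟩ | ⟨rfl, h⟩ | ⟨-, -, -, -, h⟩)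
    · exact hv _ h
    · exact (hv _ h).symm
    · exact h

lemma realizes_induce {n : ℕ} (hn : 4 ≤ n) (he : Even n) (G : SimpleGraph V)
    (hr : realizes G (Sn n)) {u v : V}
    (hu1 : G.degree u = 1) (hv1 : G.degree v = n - 1) (huv : u ≠ v)
    (hv : ∀ w, w ≠ v → G.Adj v w) (hu : ∀ w, G.Adj u w → w = v)
    (t : Finset V) (ht : t = Finset.univ \ ({u, v} : Finset V)) :
    realizes (G.induce ↑t) (Sn (n - 2)) := by
  have hus : u ∉ insert v t := by simp [ht, huv]
  have hvs : v ∉ t := by simp [ht]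
  have huniv : (Finset.univ : Finset V) = insert u (insert v t) := by
    ext z
    by_cases hz1 : z = u <;> by_cases hz2 : z = v <;> simp [ht, hz1, hz2]
  have hval : (Finset.univ : Finset V).val = u ::ₘ v ::ₘ t.val := by
    rw [huniv, Finset.insert_val_of_notMem hus, Finset.insert_val_of_notMem hvs]
  unfold realizes at hr ⊢
  have h1 := hr
  rw [hval] at h1
  simp only [Multiset.map_cons] at h1
  rw [hu1, hv1, Sn_decomp hn he, Multiset.cons_inj_right, Multiset.cons_inj_right] at h1
  have h2a : (Finset.univ : Finset ↥(↑t : Set V)).val.map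
      (fun x => (G.induce ↑t).degree x + 1)
      = (Finset.univ : Finset ↥(↑t : Set V)).val.map (fun x => G.degree (Subtype.val x)) :=
    Multiset.map_congr rfl (fun x _ => induce_degree G huv hv hu t ht x)
  have h2b : (Finset.univ : Finset ↥(↑t : Set V)).val.map (fun x => G.degree (Subtype.val x))
      = ((Finset.univ : Finset ↥(↑t : Set V)).val.map Subtype.val).map
        (fun w => G.degree w) := by rw [Multiset.map_map]; rfl
  rw [univ_val_map_subtype] at h2b
  have h2 := h2a.trans h2b
  rw [h1] at h2
  have h3 : (Finset.univ : Finset ↥(↑t : Set V)).val.map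
      (fun x => (G.induce ↑t).degree x + 1)
      = ((Finset.univ : Finset ↥(↑t : Set V)).val.map
        (fun x => (G.induce ↑t).degree x)).map (· + 1) := by
    rw [Multiset.map_map]; rfl
  rw [h3] at h2
  exact Multiset.map_injective (add_left_injective 1) h2

lemma extend_iso {V W : Type*} [Fintype V] [Fintype W] (G : SimpleGraph V) (H : SimpleGraph W)
    {u v : V} {u' v' : W} (huv : u ≠ v) (huv' : u' ≠ v')
    (hGv : ∀ w, w ≠ v → G.Adj v w) (hGu : ∀ w, G.Adj u w → w = v)
    (hHv : ∀ w, w ≠ v' → H.Adj v' w) (hHu : ∀ w, H.Adj u' w → w = v')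
    (tG : Finset V) (htG : tG = Finset.univ \ {u, v})
    (tH : Finset W) (htH : tH = Finset.univ \ {u', v'})
    (φ : (G.induce ↑tG) ≃g (H.induce ↑tH)) : Nonempty (G ≃g H) := by
  have memG : ∀ x : V, x ≠ u → x ≠ v → x ∈ (↑tG : Set V) := by
    intro x h1 h2
    have : x ∈ tG := by rw [htG]; simp [h1, h2]
    exact this
  have memH : ∀ y : W, y ≠ u' → y ≠ v' → y ∈ (↑tH : Set W) := by
    intro y h1 h2
    have : y ∈ tH := by rw [htH]; simp [h1, h2]
    exact this
  have valG : ∀ z : ↥(↑tG : Set V), (z : V) ≠ u ∧ (z : V) ≠ v := by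
    intro z
    have h : (z : V) ∈ Finset.univ \ ({u, v} : Finset V) := by rw [← htG]; exact z.2
    simp only [Finset.mem_sdiff, Finset.mem_univ, Finset.mem_insert, Finset.mem_singleton,
      true_and] at h
    push_neg at h
    exact h
  have valH : ∀ z : ↥(↑tH : Set W), (z : W) ≠ u' ∧ (z : W) ≠ v' := by
    intro z
    have h : (z : W) ∈ Finset.univ \ ({u', v'} : Finset W) := by rw [← htH]; exact z.2
    simp only [Finset.mem_sdiff, Finset.mem_univ, Finset.mem_insert, Finset.mem_singleton,
      true_and] at h
    push_neg at h
    exact h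
  refine ⟨⟨⟨fun x => if hxu : x = u then u' else if hxv : x = v then v'
      else ↑(φ ⟨x, memG x hxu hxv⟩),
    fun y => if hyu : y = u' then u else if hyv : y = v' then v
      else ↑(φ.symm ⟨y, memH y hyu hyv⟩), ?_, ?_⟩, ?_⟩⟩
  · -- left inverse
    intro x
    dsimp only
    by_cases hxu : x = u
    · subst hxu; rw [dif_pos rfl, dif_pos rfl]
    by_cases hxv : x = v
    · subst hxv; rw [dif_neg hxu, dif_pos rfl, dif_neg (Ne.symm huv'), dif_pos rfl]
    · rw [dif_neg hxu, dif_neg hxv]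
      obtain ⟨hb1, hb2⟩ := valH (φ ⟨x, memG x hxu hxv⟩)
      rw [dif_neg hb1, dif_neg hb2]
      have hsub : (⟨↑(φ ⟨x, memG x hxu hxv⟩), memH _ hb1 hb2⟩ : ↥(↑tH : Set W))
          = φ ⟨x, memG x hxu hxv⟩ := Subtype.ext rfl
      rw [hsub, RelIso.symm_apply_apply]
  · -- right inverse
    intro y
    dsimp only
    by_cases hyu : y = u'
    · subst hyu; rw [dif_pos rfl, dif_pos rfl]
    by_cases hyv : y = v'
    · subst hyv; rw [dif_neg hyu, dif_pos rfl, dif_neg (Ne.symm huv), dif_pos rfl]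
    · rw [dif_neg hyu, dif_neg hyv]
      obtain ⟨hb1, hb2⟩ := valG (φ.symm ⟨y, memH y hyu hyv⟩)
      rw [dif_neg hb1, dif_neg hb2]
      have hsub : (⟨↑(φ.symm ⟨y, memH y hyu hyv⟩), memG _ hb1 hb2⟩ : ↥(↑tG : Set V))
          = φ.symm ⟨y, memH y hyu hyv⟩ := Subtype.ext rfl
      rw [hsub, RelIso.apply_symm_apply]
  · -- map_rel_iff'
    intro a b
    simp only [Equiv.coe_fn_mk]
    have hEq : ∀ x : V, (if hxu : x = u then u' else if hxv : x = v then v'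
        else (↑(φ ⟨x, memG x hxu hxv⟩) : W)) = u' ↔ x = u := by
      intro x
      constructor
      · intro hx
        by_cases hxu : x = u
        · exact hxu
        by_cases hxv : x = v
        · rw [dif_neg hxu, dif_pos hxv] at hx; exact absurd hx.symm huv'
        · rw [dif_neg hxu, dif_neg hxv] at hx
          exact absurd hx (valH _).1
      · intro hx; rw [dif_pos hx]
    have hEqv : ∀ x : V, (if hxu : x = u then u' else if hxv : x = v then v'
        else (↑(φ ⟨x, memG x hxu hxv⟩) : W)) = v' ↔ x = v := by
      intro x
      constructor
      · intro hx
        by_cases hxu : x = u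
        · rw [dif_pos hxu] at hx; exact absurd hx huv'
        by_cases hxv : x = v
        · exact hxv
        · rw [dif_neg hxu, dif_neg hxv] at hx
          exact absurd hx (valH _).2
      · intro hx; subst hx; rw [dif_neg (Ne.symm huv), dif_pos rfl]
    have hCadj : ∀ (x y : V) (hx1 : x ≠ u) (hx2 : x ≠ v) (hy1 : y ≠ u) (hy2 : y ≠ v),
        (H.Adj ↑(φ ⟨x, memG x hx1 hx2⟩) ↑(φ ⟨y, memG y hy1 hy2⟩) ↔ G.Adj x y) := by
      intro x y hx1 hx2 hy1 hy2
      have h := φ.map_rel_iff (a := ⟨x, memG x hx1 hx2⟩) (b := ⟨y, memG y hy1 hy2⟩)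
      simpa using h
    rw [adj_char H hHv hHu, adj_char G hGv hGu]
    constructor
    · rintro (⟨h1, h2⟩ | ⟨h1, h2⟩ | ⟨h1, h2, h3, h4, h5⟩)
      · exact Or.inl ⟨(hEqv a).1 h1, fun hb => h2 ((hEqv b).2 hb)⟩
      · exact Or.inr (Or.inl ⟨(hEqv b).1 h1, fun ha => h2 ((hEqv a).2 ha)⟩)
      · have ha1 : a ≠ u := fun h => h1 ((hEq a).2 h)
        have ha2 : a ≠ v := fun h => h2 ((hEqv a).2 h)
        have hb1 : b ≠ u := fun h => h3 ((hEq b).2 h)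
        have hb2 : b ≠ v := fun h => h4 ((hEqv b).2 h)
        refine Or.inr (Or.inr ⟨ha1, ha2, hb1, hb2, ?_⟩)
        rw [dif_neg ha1, dif_neg ha2, dif_neg hb1, dif_neg hb2] at h5
        exact (hCadj a b ha1 ha2 hb1 hb2).1 h5
    · rintro (⟨h1, h2⟩ | ⟨h1, h2⟩ | ⟨ha1, ha2, hb1, hb2, h5⟩)
      · exact Or.inl ⟨(hEqv a).2 h1, fun hb => h2 ((hEqv b).1 hb)⟩
      · exact Or.inr (Or.inl ⟨(hEqv b).2 h1, fun ha => h2 ((hEqv a).1 ha)⟩)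
      · refine Or.inr (Or.inr ⟨fun h => ha1 ((hEq a).1 h), fun h => ha2 ((hEqv a).1 h),
          fun h => hb1 ((hEq b).1 h), fun h => hb2 ((hEqv b).1 h), ?_⟩)
        rw [dif_neg ha1, dif_neg ha2, dif_neg hb1, dif_neg hb2]
        exact (hCadj a b ha1 ha2 hb1 hb2).2 h5

lemma key_iso : ∀ (n : ℕ), 0 < n → Even n → ∀ {V W : Type u} [Fintype V] [Fintype W]
    (G : SimpleGraph V) (H : SimpleGraph W),
    realizes G (Sn n) → realizes H (Sn n) → Nonempty (G ≃g H) := by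
  intro n
  induction n using Nat.strong_induction_on with
  | _ n ih =>
  intro hn he V W _ _ G H hG hH
  by_cases h2 : n = 2
  · subst h2
    have hcV : Fintype.card V = 2 := card_of_realizes (by norm_num) hG
    have hcW : Fintype.card W = 2 := card_of_realizes (by norm_num) hH
    have hdegV : ∀ x : V, G.degree x = 1 := by
      intro x
      have := deg_mem hG x
      simp [Sn, Multiset.range_succ] at this
      exact this
    have hdegW : ∀ y : W, H.degree y = 1 := by
      intro y
      have := deg_mem hH y
      simp [Sn, Multiset.range_succ] at this
      exact this
    have hGall : ∀ x w : V, w ≠ x → G.Adj x w := by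
      intro x
      exact adj_all_of_degree G x (by rw [hdegV x, hcV])
    have hHall : ∀ y w : W, w ≠ y → H.Adj y w := by
      intro y
      exact adj_all_of_degree H y (by rw [hdegW y, hcW])
    have e : V ≃ W := Fintype.equivOfCardEq (hcV.trans hcW.symm)
    refine ⟨⟨e, ?_⟩⟩
    intro a b
    constructor
    · intro h
      exact hGall a b (fun hba => H.ne_of_adj h (congrArg e hba.symm))
    · intro h
      exact hHall (e a) (e b) (fun hba => G.ne_of_adj h (e.injective hba.symm))
  · have hn4 : 4 ≤ n := by
      obtain ⟨m, rfl⟩ := he; omega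
    have hcV : Fintype.card V = n := card_of_realizes hn hG
    have hcW : Fintype.card W = n := card_of_realizes hn hH
    obtain ⟨uG, huG⟩ := exists_deg hG (one_mem_Sn (by omega))
    obtain ⟨vG, hvG⟩ := exists_deg hG (top_mem_Sn (by omega))
    obtain ⟨uH, huH⟩ := exists_deg hH (one_mem_Sn (by omega))
    obtain ⟨vH, hvH⟩ := exists_deg hH (top_mem_Sn (by omega))
    have huvG : uG ≠ vG := by
      intro h; rw [h, hvG] at huG; omega
    have huvH : uH ≠ vH := by
      intro h; rw [h, hvH] at huH; omega
    have hGall : ∀ w, w ≠ vG → G.Adj vG w :=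
      adj_all_of_degree G vG (by rw [hvG, hcV])
    have hHall : ∀ w, w ≠ vH → H.Adj vH w :=
      adj_all_of_degree H vH (by rw [hvH, hcW])
    have hGonly : ∀ w, G.Adj uG w → w = vG :=
      neighbor_unique G huG ((hGall uG huvG).symm)
    have hHonly : ∀ w, H.Adj uH w → w = vH :=
      neighbor_unique H huH ((hHall uH huvH).symm)
    have hG' : realizes (G.induce ↑(Finset.univ \ ({uG, vG} : Finset V))) (Sn (n - 2)) :=
      realizes_induce hn4 he G hG huG hvG huvG hGall hGonly _ rfl
    have hH' : realizes (H.induce ↑(Finset.univ \ ({uH, vH} : Finset W))) (Sn (n - 2)) :=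
      realizes_induce hn4 he H hH huH hvH huvH hHall hHonly _ rfl
    have he2 : Even (n - 2) := by
      obtain ⟨m, rfl⟩ := he; exact ⟨m - 1, by omega⟩
    obtain ⟨φ⟩ := ih (n - 2) (by omega) (by omega) he2 _ _ hG' hH'
    exact extend_iso G H huvG huvH hGall hGonly hHall hHonly _ rfl _ rfl φ

lemma multiset_range_add (a b : ℕ) :
    Multiset.range (a+b) = Multiset.range a + (Multiset.range b).map (fun x => a + x) := by
  have h : Multiset.range (a+b)
      = ((List.range a ++ List.map (fun x => a+x) (List.range b) : List ℕ) : Multiset ℕ) :=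
    congrArg _ (List.range_add (n := a) (m := b))
  rw [h]
  rw [← Multiset.coe_add]
  rfl

lemma univ_val_map_fin_val (N : ℕ) :
    (Finset.univ : Finset (Fin N)).val.map Fin.val = Multiset.range N := by
  refine (Multiset.Nodup.ext ?_ (Multiset.nodup_range N)).2 ?_
  · exact Finset.univ.nodup.map Fin.val_injective
  · intro k
    simp only [Multiset.mem_map, Multiset.mem_range]
    constructor
    · rintro ⟨i, -, rfl⟩; exact i.isLt
    · intro hk; exact ⟨⟨k, hk⟩, Finset.mem_univ_val _, rfl⟩

def canon (m : ℕ) : SimpleGraph (Fin (m+m)) where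
  Adj i j := i ≠ j ∧ m + m ≤ (i:ℕ) + (j:ℕ) + 1
  symm := ⟨by rintro i j ⟨h1, h2⟩; exact ⟨h1.symm, by omega⟩⟩
  loopless := ⟨by rintro i ⟨h, -⟩; exact h rfl⟩

lemma canon_degree (m : ℕ) (hm : 1 ≤ m) (i : Fin (m+m)) :
    (canon m).degree i = if (i:ℕ) < m then (i:ℕ)+1 else (i:ℕ) := by
  have h1 : (canon m).degree i
      = ((Finset.univ : Finset (Fin (m+m))).filter (fun j => (canon m).Adj i j)).card := by
    rw [← SimpleGraph.neighborFinset_eq_filter, SimpleGraph.card_neighborFinset_eq_degree]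
  have h2 : (Finset.univ : Finset (Fin (m+m))).filter (fun j => (canon m).Adj i j)
      = (Finset.univ : Finset (Fin (m+m))).filter
          (fun j : Fin (m+m) => ¬ (j:ℕ) = (i:ℕ) ∧ m + m ≤ (i:ℕ) + (j:ℕ) + 1) := by
    refine Finset.filter_congr ?_
    intro j _
    show (canon m).Adj i j ↔ _
    constructor
    · rintro ⟨hij, hle⟩
      exact ⟨fun h => hij (Fin.ext h.symm), hle⟩
    · rintro ⟨hij, hle⟩
      exact ⟨fun h => hij (congrArg Fin.val h).symm, hle⟩
  have h3 : ((Finset.univ : Finset (Fin (m+m))).filter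
        (fun j : Fin (m+m) => ¬ (j:ℕ) = (i:ℕ) ∧ m + m ≤ (i:ℕ) + (j:ℕ) + 1)).card
      = ((Finset.range (m+m)).filter
        (fun k => ¬ k = (i:ℕ) ∧ m + m ≤ (i:ℕ) + k + 1)).card := by
    rw [Finset.card_filter, Finset.card_filter]
    exact Fin.sum_univ_eq_sum_range
      (fun k => if ¬ k = (i:ℕ) ∧ m + m ≤ (i:ℕ) + k + 1 then 1 else 0) (m+m)
  have h4 : (Finset.range (m+m)).filter (fun k => ¬ k = (i:ℕ) ∧ m + m ≤ (i:ℕ) + k + 1)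
      = (Finset.Ico (m + m - 1 - (i:ℕ)) (m+m)).erase (i:ℕ) := by
    ext k
    simp only [Finset.mem_filter, Finset.mem_range, Finset.mem_erase, Finset.mem_Ico]
    omega
  have hlt : (i:ℕ) < m + m := i.isLt
  rw [h1, h2, h3, h4]
  by_cases hi : (i:ℕ) < m
  · rw [Finset.erase_eq_of_notMem (by simp only [Finset.mem_Ico]; omega)]
    rw [Nat.card_Ico]
    simp only [hi, if_true]
    omega
  · rw [Finset.card_erase_of_mem (by simp only [Finset.mem_Ico]; omega)]
    rw [Nat.card_Ico]
    simp only [hi, if_false]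
    omega

lemma canon_realizes (m : ℕ) (hm : 1 ≤ m) : realizes (canon m) (Sn (m+m)) := by
  obtain ⟨m', rfl⟩ : ∃ m', m = m' + 1 := ⟨m - 1, by omega⟩
  unfold realizes
  rw [Multiset.map_congr rfl (fun x _ => canon_degree (m'+1) hm x)]
  rw [show (fun v : Fin ((m'+1)+(m'+1)) => if (v:ℕ) < m'+1 then (v:ℕ)+1 else (v:ℕ))
      = (fun k => if k < m'+1 then k+1 else k) ∘ Fin.val from rfl,
    ← Multiset.map_map, univ_val_map_fin_val]
  rw [multiset_range_add (m'+1) (m'+1), Multiset.map_add]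
  have hA : (Multiset.range (m'+1)).map (fun k => if k < m'+1 then k+1 else k)
      = (Multiset.range (m'+1)).map (· + 1) := by
    refine Multiset.map_congr rfl ?_
    intro k hk
    rw [Multiset.mem_range] at hk
    simp [hk]
  have hB : ((Multiset.range (m'+1)).map (fun x => (m'+1) + x)).map
        (fun k => if k < m'+1 then k+1 else k)
      = (Multiset.range (m'+1)).map (fun x => (m'+1) + x) := by
    rw [Multiset.map_map]
    refine Multiset.map_congr rfl ?_
    intro k hk
    simp only [Function.comp_apply]
    rw [if_neg (by omega)]
  rw [hA, hB]
  have hC : (Multiset.range (m'+1)).map (fun x => (m'+1) + x)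
      = (m'+1) ::ₘ (Multiset.range m').map (fun x => (m'+1) + x + 1) := by
    rw [range_succ', Multiset.map_cons, Multiset.map_map]
    refine congrArg₂ _ (by omega) (Multiset.map_congr rfl ?_)
    intro k _
    simp only [Function.comp_apply]
    omega
  rw [hC]
  have hD : Sn ((m'+1)+(m'+1)) = (m'+1) ::ₘ ((Multiset.range (m'+1)).map (· + 1)
      + (Multiset.range m').map (fun x => (m'+1) + x + 1)) := by
    unfold Sn
    rw [show ((m'+1)+(m'+1))/2 = m'+1 from by omega,
      show (m'+1)+(m'+1) - 1 = (m'+1) + m' from by omega,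
      multiset_range_add (m'+1) m', Multiset.map_add, Multiset.map_map]
    refine congrArg _ (congrArg _ (Multiset.map_congr rfl ?_))
    intro k _
    simp only [Function.comp_apply]
  rw [hD, Multiset.add_cons]

lemma exists_realizes {n : ℕ} (hn : 0 < n) (he : Even n) :
    ∃ G : SimpleGraph (Fin n), realizes G (Sn n) := by
  obtain ⟨m, rfl⟩ := he
  exact ⟨canon m, canon_realizes m (by omega)⟩

theorem unique_realization_Sn {n : ℕ} (hn : 0 < n) (heven : Even n) :
    ∃ G : SimpleGraph (Fin n), realizes G (Sn n) ∧
      ∀ H : SimpleGraph (Fin n), realizes H (Sn n) → Nonempty (H ≃g G) := by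
  obtain ⟨G, hG⟩ := exists_realizes hn heven
  exact ⟨G, hG, fun H hH => key_iso n hn heven H G hH hG⟩
end

section
/- For every k ≥ 1, if there exists a degree sequence realized by exactly k pairwise non-isomorphic graphs, then there exist infinitely many degree sequences each realized by exactly k pairwise non-isomorphic graphs, all of which are connected. -/
open scoped Classical

namespace ConeAux

open SimpleGraph Finset

variable {V W U : Type*}

/-- The cone over a graph: add an apex adjacent to everything. -/
def cone (G : SimpleGraph V) : SimpleGraph (Option V) where
  Adj a b := Option.casesOn a (b ≠ none)
    (fun x => Option.casesOn b True (fun y => G.Adj x y))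
  symm := ⟨by rintro (_ | x) (_ | y) h <;> simp_all <;> exact G.adj_symm h⟩
  loopless := ⟨by rintro (_ | x) h <;> simp_all⟩

@[simp] lemma cone_adj_none_left {G : SimpleGraph V} {b : Option V} :
    (cone G).Adj none b ↔ b ≠ none := Iff.rfl

@[simp] lemma cone_adj_none_right {G : SimpleGraph V} {x : V} :
    (cone G).Adj (some x) none := trivial

@[simp] lemma cone_adj_some_some {G : SimpleGraph V} {x y : V} :
    (cone G).Adj (some x) (some y) ↔ G.Adj x y := Iff.rfl

@[simp] lemma cone_adj_some_none {G : SimpleGraph V} {x : V} :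
    (cone G).Adj (some x) none ↔ True := Iff.rfl

variable [Fintype V] [Fintype W]

lemma cone_degree_none (G : SimpleGraph V) :
    (cone G).degree none = Fintype.card V := by
  classical
  have h : (cone G).neighborFinset none = Finset.univ.erase none := by
    ext b; simp [mem_neighborFinset, Finset.mem_erase]
  rw [SimpleGraph.degree, h, Finset.card_erase_of_mem (Finset.mem_univ _),
    Finset.card_univ, Fintype.card_option]
  simp

lemma cone_degree_some (G : SimpleGraph V) (x : V) :
    (cone G).degree (some x) = G.degree x + 1 := by
  classical
  have h : (cone G).neighborFinset (some x)
      = insert none ((G.neighborFinset x).map Function.Embedding.some) := by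
    ext b
    rcases b with _ | y <;>
      simp [mem_neighborFinset]
  rw [SimpleGraph.degree, h, Finset.card_insert_of_notMem (by simp),
    Finset.card_map]
  rfl

lemma realizes_cone {G : SimpleGraph V} {s : Multiset ℕ} (h : realizes G s) :
    realizes (cone G) (Fintype.card V ::ₘ s.map (· + 1)) := by
  classical
  unfold realizes at h ⊢
  have huniv : (Finset.univ : Finset (Option V)).val
      = none ::ₘ (Finset.univ : Finset V).val.map some := by
    rfl
  rw [huniv, Multiset.map_cons, Multiset.map_map, cone_degree_none, ← h,
    Multiset.map_map]
  congr 1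
  apply Multiset.map_congr rfl
  intro x _
  simp [cone_degree_some]

/-- Isomorphic graphs have the same degree multiset. -/
lemma realizes_of_iso {G : SimpleGraph V} {H : SimpleGraph W} (e : G ≃g H)
    {s : Multiset ℕ} (h : realizes G s) : realizes H s := by
  classical
  unfold realizes at h ⊢
  have huniv : (Finset.univ : Finset W) = Finset.univ.map e.toEquiv.toEmbedding :=
    (Finset.map_univ_equiv _).symm
  rw [huniv]
  have : (Finset.univ.map e.toEquiv.toEmbedding).val
      = (Finset.univ : Finset V).val.map e.toEquiv := rfl
  rw [this, Multiset.map_map, ← h]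
  apply Multiset.map_congr rfl
  intro v _
  show H.degree (e v) = G.degree v
  rw [← card_neighborSet_eq_degree, ← card_neighborSet_eq_degree]
  exact Fintype.card_congr (e.mapNeighborSet v).symm

/-- Functoriality of the cone on isomorphisms. -/
def coneIso {G : SimpleGraph V} {H : SimpleGraph W} (e : G ≃g H) :
    cone G ≃g cone H := by
  refine ⟨e.toEquiv.optionCongr, ?_⟩
  rintro (_ | x) (_ | y) <;> simp [cone, e.map_rel_iff]

/-- Swapping the apex with a dominating vertex is an automorphism of the cone. -/
noncomputable def swapIso (G : SimpleGraph W) (v : W) (hd : ∀ x, x ≠ v → G.Adj v x) :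
    cone G ≃g cone G := by
  classical
  refine ⟨Equiv.swap none (some v), ?_⟩
  have key : ∀ a b : Option W, (cone G).Adj a b →
      (cone G).Adj (Equiv.swap none (some v) a) (Equiv.swap none (some v) b) := by
    rintro (_ | x) (_ | y) hab
    · simp at hab
    · rw [Equiv.swap_apply_left]
      by_cases hy : y = v
      · subst hy; rw [Equiv.swap_apply_right]; exact cone_adj_none_right
      · rw [Equiv.swap_apply_of_ne_of_ne (by simp) (by simpa using hy)]
        exact hd y hy
    · rw [Equiv.swap_apply_left]
      by_cases hx : x = v
      · subst hx; rw [Equiv.swap_apply_right]; simp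
      · rw [Equiv.swap_apply_of_ne_of_ne (by simp) (by simpa using hx)]
        exact ((cone G).adj_symm (hd x hx))
    · have hxy : x ≠ y := fun h => by subst h; exact (cone G).loopless.irrefl _ hab
      by_cases hx : x = v
      · subst hx
        rw [Equiv.swap_apply_right,
          Equiv.swap_apply_of_ne_of_ne (by simp) (by simpa using (Ne.symm hxy))]
        simp
      · by_cases hy : y = v
        · subst hy
          rw [Equiv.swap_apply_right,
            Equiv.swap_apply_of_ne_of_ne (by simp) (by simpa using hxy)]
          exact cone_adj_none_right
        · rw [Equiv.swap_apply_of_ne_of_ne (by simp) (by simpa using hx),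
            Equiv.swap_apply_of_ne_of_ne (by simp) (by simpa using hy)]
          exact hab
  intro a b
  constructor
  · intro hab
    have := key _ _ hab
    simpa using this
  · exact key a b

lemma cone_cancel_aux {G : SimpleGraph V} {H : SimpleGraph W}
    (ψ : cone G ≃g cone H) (h : ψ none = none) : Nonempty (G ≃g H) := by
  have hsome : ∀ x : V, ψ (some x) = some (ψ.toEquiv.removeNone x) := by
    intro x
    have hne : ψ (some x) ≠ none := by
      intro hc
      exact (by simpa using ψ.toEquiv.injective (hc.trans h.symm))
    obtain ⟨b, hb⟩ := Option.ne_none_iff_exists'.mp hne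
    exact (Equiv.removeNone_some ψ.toEquiv ⟨b, hb⟩).symm
  refine ⟨⟨ψ.toEquiv.removeNone, ?_⟩⟩
  intro x y
  have : H.Adj (ψ.toEquiv.removeNone x) (ψ.toEquiv.removeNone y)
      ↔ (cone H).Adj (ψ (some x)) (ψ (some y)) := by
    rw [hsome x, hsome y]; exact cone_adj_some_some.symm
  rw [this, ψ.map_rel_iff]
  exact cone_adj_some_some

lemma cone_cancel {G : SimpleGraph V} {H : SimpleGraph W}
    (φ : cone G ≃g cone H) : Nonempty (G ≃g H) := by
  classical
  rcases hn : φ none with _ | v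
  · exact cone_cancel_aux φ hn
  · -- v is dominating in H
    have hd : ∀ x, x ≠ v → H.Adj v x := by
      intro x hx
      have hne : φ.symm (some x) ≠ none := by
        intro hc
        have h1 := φ.apply_symm_apply (some x)
        rw [hc, hn] at h1
        exact hx (Option.some_inj.mp h1.symm)
      obtain ⟨z, hz⟩ := Option.ne_none_iff_exists'.mp hne
      have hadj : (cone G).Adj none (some z) := by simp
      have h2 := φ.map_rel_iff.mpr (hz ▸ hadj : (cone G).Adj none (φ.symm (some x)))
      rw [φ.apply_symm_apply, hn] at h2
      exact h2
    have hψ : (φ.trans (swapIso H v hd)) none = none := by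
      show (swapIso H v hd) (φ none) = none
      rw [hn]
      show Equiv.swap (none : Option W) (some v) (some v) = none
      exact Equiv.swap_apply_right _ _
    exact cone_cancel_aux (φ.trans (swapIso H v hd)) hψ

/-- Pulling back along an equivalence gives an isomorphic graph. -/
def comapIso (e : U ≃ W) (H : SimpleGraph W) : H.comap e ≃g H :=
  ⟨e, fun {_ _} => Iff.rfl⟩

lemma dominating_of_degree (H : SimpleGraph W) (v : W)
    (hdeg : H.degree v = Fintype.card W - 1) : ∀ x, x ≠ v → H.Adj v x := by
  classical
  intro x hx
  have hsub : H.neighborFinset v ⊆ Finset.univ.erase v := by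
    intro w hw
    rw [Finset.mem_erase]
    exact ⟨fun h => H.loopless.irrefl v (h ▸ ((H.mem_neighborFinset v w).mp hw)), Finset.mem_univ _⟩
  have hcard : (Finset.univ.erase v).card ≤ (H.neighborFinset v).card := by
    rw [Finset.card_erase_of_mem (Finset.mem_univ _), Finset.card_univ]
    rw [SimpleGraph.degree] at hdeg
    omega
  have heq := Finset.eq_of_subset_of_card_le hsub hcard
  have hx' : x ∈ H.neighborFinset v := by
    rw [heq, Finset.mem_erase]
    exact ⟨hx, Finset.mem_univ _⟩
  exact (H.mem_neighborFinset v x).mp hx'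

lemma connected_of_dominating (H : SimpleGraph W) (v : W)
    (hd : ∀ x, x ≠ v → H.Adj v x) : H.Connected := by
  have reach : ∀ a, H.Reachable a v := by
    intro a
    by_cases h : a = v
    · rw [h]
    · exact ((hd a h).symm).reachable
  haveI : Nonempty W := ⟨v⟩
  exact ⟨fun a b => (reach a).trans (reach b).symm⟩

/-- A graph with a dominating vertex is a cone. -/
def isoConeOfDominating (H : SimpleGraph W) (v : W)
    (hd : ∀ x, x ≠ v → H.Adj v x) (σ : W ≃ Option U) (hσ : σ v = none) :
    H ≃g cone (H.comap (fun x : U => σ.symm (some x))) := by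
  refine ⟨σ, ?_⟩
  intro a b
  rcases ha : σ a with _ | x <;> rcases hb : σ b with _ | y
  · have hav : a = v := σ.injective (ha.trans hσ.symm)
    have hbv : b = v := σ.injective (hb.trans hσ.symm)
    subst hav; subst hbv
    simp
  · have hav : a = v := σ.injective (ha.trans hσ.symm)
    have hbv : b ≠ v := by
      intro h; rw [h, hσ] at hb; exact Option.some_ne_none y hb.symm
    subst hav
    simpa using hd b hbv
  · have hbv : b = v := σ.injective (hb.trans hσ.symm)
    have hav : a ≠ v := by
      intro h; rw [h, hσ] at ha; exact Option.some_ne_none x ha.symm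
    subst hbv
    simpa using (hd a hav).symm
  · have ha' : σ.symm (some x) = a := by rw [← ha, σ.symm_apply_apply]
    have hb' : σ.symm (some y) = b := by rw [← hb, σ.symm_apply_apply]
    show H.Adj (σ.symm (some x)) (σ.symm (some y)) ↔ H.Adj a b
    rw [ha', hb']

lemma step {k n : ℕ} {s : Multiset ℕ} (hcard : Multiset.card s = n)
    (hK : exactlyKRealizations k n s) :
    Multiset.card ((n : ℕ) ::ₘ s.map (· + 1)) = n + 1 ∧
    exactlyKRealizations k (n + 1) (n ::ₘ s.map (· + 1)) ∧
    ∀ H : SimpleGraph (Fin (n + 1)), realizes H (n ::ₘ s.map (· + 1)) → H.Connected := by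
  classical
  have hdom : ∀ H : SimpleGraph (Fin (n + 1)), realizes H (n ::ₘ s.map (· + 1)) →
      ∃ v, ∀ x, x ≠ v → H.Adj v x := by
    intro H hH
    have hmem : (n : ℕ) ∈ Finset.univ.val.map (fun v => H.degree v) := by
      rw [hH]; exact Multiset.mem_cons_self _ _
    obtain ⟨v, _, hv⟩ := Multiset.mem_map.mp hmem
    exact ⟨v, dominating_of_degree H v (by rw [hv]; simp)⟩
  refine ⟨by simp [hcard], ?_, ?_⟩
  · obtain ⟨Gs, hreal, hinj, hcompl⟩ := hK
    set e : Fin (n + 1) ≃ Option (Fin n) := finSuccEquiv n with he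
    refine ⟨fun i => (cone (Gs i)).comap e, ?_, ?_, ?_⟩
    · intro i
      have h1 := realizes_cone (hreal i)
      rw [Fintype.card_fin] at h1
      exact realizes_of_iso (comapIso e (cone (Gs i))).symm h1
    · rintro i j ⟨f⟩
      exact hinj i j (cone_cancel ((comapIso e (cone (Gs i))).symm.trans
        (f.trans (comapIso e (cone (Gs j))))))
    · intro H hH
      obtain ⟨v, hd⟩ := hdom H hH
      set σ : Fin (n + 1) ≃ Option (Fin n) := (Equiv.swap v 0).trans e with hσdef
      have hσ : σ v = none := by
        simp [hσdef, he, Equiv.swap_apply_left, finSuccEquiv_zero]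
      set Gv : SimpleGraph (Fin n) := H.comap (fun x : Fin n => σ.symm (some x)) with hGv
      have ι : H ≃g cone Gv := isoConeOfDominating H v hd σ hσ
      set t : Multiset ℕ := Finset.univ.val.map (fun x => Gv.degree x) with htdef
      have h1 : realizes (cone Gv) (Fintype.card (Fin n) ::ₘ t.map (· + 1)) :=
        realizes_cone rfl
      rw [Fintype.card_fin] at h1
      have h2 : realizes (cone Gv) ((n : ℕ) ::ₘ s.map (· + 1)) :=
        realizes_of_iso ι hH
      have h3 : t.map (· + 1) = s.map (· + 1) := by
        have := h1.symm.trans h2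
        exact (Multiset.cons_inj_right _).mp this
      have h4 : t = s := Multiset.map_injective (add_left_injective 1) h3
      have h5 : realizes Gv s := by rw [realizes]; exact h4
      obtain ⟨i, ⟨f⟩⟩ := hcompl Gv h5
      exact ⟨i, ⟨ι.trans ((coneIso f).trans (comapIso e (cone (Gs i))).symm)⟩⟩
  · intro H hH
    obtain ⟨v, hd⟩ := hdom H hH
    exact connected_of_dominating H v hd

end ConeAux

theorem infinitely_many_sequences_with_k_realizations {k : ℕ} (hk : 1 ≤ k)
    (h : ∃ (n : ℕ) (s : Multiset ℕ), Multiset.card s = n ∧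
      exactlyKRealizations k n s) :
    ∀ N : ℕ, ∃ (m : ℕ) (s : Multiset ℕ), N < m ∧ Multiset.card s = m ∧
      exactlyKRealizations k m s ∧
      ∀ G : SimpleGraph (Fin m), realizes G s → G.Connected := by
  obtain ⟨n, s, hcard, hK⟩ := h
  have iter : ∀ j : ℕ, ∃ t : Multiset ℕ,
      Multiset.card t = n + j ∧ exactlyKRealizations k (n + j) t := by
    intro j
    induction j with
    | zero => exact ⟨s, by simpa using hcard, by simpa using hK⟩
    | succ j ih =>
      obtain ⟨t, ht, hKt⟩ := ih
      obtain ⟨hc, hk', -⟩ := ConeAux.step ht hKt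
      exact ⟨_, by omega, hk'⟩
  intro N
  obtain ⟨t, ht, hKt⟩ := iter N
  obtain ⟨hc, hk', hconn⟩ := ConeAux.step ht hKt
  exact ⟨n + N + 1, _, by omega, hc, hk', hconn⟩
end
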